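/- arXiv:2206.10823 — 4 statements merged into one kernel-verified Lean document; each statement's English description precedes it below -/
import Mathlib

section
/- Let c ≥ 8. Every c-partite tournament that is a member of the family ℋ contains no (c+2)-cycle. -/
namespace MPT

variable {V : Type*}

/-- `D` together with the partition map `part : V → Fin c` is a `c`-partite tournament:
no arcs inside a partite set, and exactly one arc between any two vertices in
different partite sets. -/
structure IsCPT (D : Digraph V) (c : ℕ) (part : V → Fin c) : Prop where
  part_surj : Function.Surjective part
  not_adj_of_same : ∀ x y : V, part x = part y → ¬ D.Adj x y
  xor_adj : ∀ x y : V, part x ≠ part y → Xor' (D.Adj x y) (D.Adj y x)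

/-- `f 0, f 1, …, f n` is a directed walk of length `n` from `x` to `y` in `D`. -/
def IsWalk (D : Digraph V) (n : ℕ) (f : ℕ → V) (x y : V) : Prop :=
  f 0 = x ∧ f n = y ∧ ∀ i < n, D.Adj (f i) (f (i + 1))

/-- A digraph is strong if each vertex can reach each other vertex by a directed path. -/
def IsStrong (D : Digraph V) : Prop :=
  ∀ x y : V, x ≠ y → ∃ (n : ℕ) (f : ℕ → V), IsWalk D n f x y

/-- A `c`-partite tournament is rich if it is strong and every partite set has at
least two vertices. -/
def IsRich (D : Digraph V) (c : ℕ) (part : V → Fin c) : Prop :=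
  IsStrong D ∧ ∀ p : Fin c, ∃ u v : V, u ≠ v ∧ part u = p ∧ part v = p

/-- `D` contains a directed cycle with exactly `q` arcs (through `q` distinct vertices). -/
def HasCycle (D : Digraph V) (q : ℕ) : Prop :=
  ∃ f : ZMod q → V, Function.Injective f ∧ ∀ i : ZMod q, D.Adj (f i) (f (i + 1))

/-- The distance from `x` to `y`: the length of a shortest directed path. -/
noncomputable def dist (D : Digraph V) (x y : V) : ℕ :=
  sInf {n : ℕ | ∃ f : ℕ → V, IsWalk D n f x y}

/-- `{i, j} ≡ {s, t} (mod n)` as unordered pairs of residues. -/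
def ModEqPair (n i j s t : ℕ) : Prop :=
  (i ≡ s [MOD n] ∧ j ≡ t [MOD n]) ∨ (i ≡ t [MOD n] ∧ j ≡ s [MOD n])

/-- The arc rule of `Q¹_m` at the level of path indices: an arc from `x_i` to `x_j`
iff `j = i + 1`, or `i - j > 1` and `i ≢ j (mod c+1)`; with all arcs between the
residue classes of `s` and `t` (mod `c+1`) deleted. -/
def QArc (c s t i j : ℕ) : Prop :=
  (j = i + 1 ∨ (j + 1 < i ∧ ¬ i ≡ j [MOD c + 1])) ∧ ¬ ModEqPair (c + 1) i j s t

/-- The indices of `Q¹_m` that may be blown up into a larger independent set. -/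
def QBlowup (c m s t i : ℕ) : Prop :=
  i = 1 ∨ i = 2 ∨ i = m - 1 ∨ i = m ∨
  (s = 1 ∧ (t = 3 ∨ t = 4) ∧ i = t) ∨
  (i = m - 2 ∧ ModEqPair (c + 1) m (m - 2) s t) ∨
  (i = m - 3 ∧ ModEqPair (c + 1) m (m - 3) s t)

/-- `D` is obtained from the path-indexed digraph with arc rule `arc` on indices
`1, …, m` by replacing index `i` with an independent vertex set `A i`, where only
indices satisfying `allowed` may receive more than one vertex. -/
def IsBlowupOf (D : Digraph V) (m : ℕ) (arc : ℕ → ℕ → Prop) (allowed : ℕ → Prop) : Prop :=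
  ∃ A : ℕ → Set V,
    (∀ v : V, ∃ i, 1 ≤ i ∧ i ≤ m ∧ v ∈ A i) ∧
    (∀ i j, i ≠ j → Disjoint (A i) (A j)) ∧
    (∀ i, 1 ≤ i → i ≤ m → (A i).Nonempty) ∧
    (∀ i, 1 ≤ i → i ≤ m → ¬ allowed i → (A i).Subsingleton) ∧
    (∀ i j, 1 ≤ i → i ≤ m → 1 ≤ j → j ≤ m →
      ∀ u ∈ A i, ∀ w ∈ A j, (D.Adj u w ↔ arc i j))

/-- Membership in the family `𝒬¹_m`. -/
def IsInQ1 (D : Digraph V) (c m : ℕ) : Prop :=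
  ∃ s t : ℕ, 1 ≤ s ∧ s + 1 < t ∧ t ≤ c + 1 ∧
    IsBlowupOf D m (QArc c s t) (QBlowup c m s t)

/-- The four cases in which arcs between `A a` and `A b` get reversed to form `𝒬²_m`. -/
def QRevCase (c m s t a b : ℕ) : Prop :=
  (t = 3 ∧ s = 1 ∧ a = 2 ∧ b = 3) ∨
  (t = c + 1 ∧ s = 2 ∧ a = 1 ∧ b = 2) ∨
  (ModEqPair (c + 1) (m - 2) m s t ∧ a = m - 2 ∧ b = m - 1) ∨
  (ModEqPair (c + 1) (m - 1) (m - c) s t ∧ a = m - 1 ∧ b = m)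

/-- The arc rule obtained from `QArc` by reversing all arcs from index `a` to index `b`. -/
def QArcRev (c s t a b i j : ℕ) : Prop :=
  ((¬(i = a ∧ j = b) ∧ ¬(i = b ∧ j = a)) ∧ QArc c s t i j) ∨
  ((i = b ∧ j = a) ∧ QArc c s t a b)

/-- Membership in the family `𝒬²_m`. -/
def IsInQ2 (D : Digraph V) (c m : ℕ) : Prop :=
  ∃ s t a b : ℕ, 1 ≤ s ∧ s + 1 < t ∧ t ≤ c + 1 ∧ QRevCase c m s t a b ∧
    IsBlowupOf D m (QArcRev c s t a b) (QBlowup c m s t)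

/-- Membership in the family `𝒬_m = 𝒬¹_m ∪ 𝒬²_m`. -/
def IsInQ (D : Digraph V) (c m : ℕ) : Prop :=
  IsInQ1 D c m ∨ IsInQ2 D c m

/-- The arc rule of `W_m`: an arc from `x_i` to `x_j` iff `j = i + 1`, or
`i - j > 1` and `i ≢ j (mod c)`. -/
def WArc (c i j : ℕ) : Prop :=
  j = i + 1 ∨ (j + 1 < i ∧ ¬ i ≡ j [MOD c])

/-- The indices of `W_m` that are blown up (into sets of size at least two). -/
def WBlowup (m i : ℕ) : Prop :=
  i = 1 ∨ i = 2 ∨ i = m - 1 ∨ i = m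

/-- Membership in the family `𝒲_m`. -/
def IsInW (D : Digraph V) (c m : ℕ) : Prop :=
  ∃ A : ℕ → Set V,
    (∀ v : V, ∃ i, 1 ≤ i ∧ i ≤ m ∧ v ∈ A i) ∧
    (∀ i j, i ≠ j → Disjoint (A i) (A j)) ∧
    (∀ i, 1 ≤ i → i ≤ m → (A i).Nonempty) ∧
    (∀ i, 1 ≤ i → i ≤ m → WBlowup m i → ∃ u ∈ A i, ∃ w ∈ A i, u ≠ w) ∧
    (∀ i, 1 ≤ i → i ≤ m → ¬ WBlowup m i → (A i).Subsingleton) ∧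
    (∀ i j, 1 ≤ i → i ≤ m → 1 ≤ j → j ≤ m →
      ∀ u ∈ A i, ∀ w ∈ A j, (D.Adj u w ↔ WArc c i j))

/-- Membership in the family `ℋ`: there is an index `i` with `2 < i < c - 1`,
partite sets `W 2, …, W (c+1)` (with `W i` possibly of size one and all others of
size at least two) and a distinguished extra vertex `v1`, such that every vertex of
`W j₁` dominates every vertex of `W j₂` for `2 ≤ j₁ < j₂ ≤ c + 1`, there are no arcs
inside a `W j` nor between `v1` and `W i`, and between `v1` and each vertex of each
`W j` (`j ≠ i`) there is exactly one arc of arbitrary direction. -/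
def IsInH (D : Digraph V) (c : ℕ) : Prop :=
  ∃ i : ℕ, 2 < i ∧ i + 1 < c ∧
  ∃ (W : ℕ → Set V) (v1 : V),
    (∀ v : V, v = v1 ∨ ∃ j, 2 ≤ j ∧ j ≤ c + 1 ∧ v ∈ W j) ∧
    (∀ j, 2 ≤ j → j ≤ c + 1 → v1 ∉ W j) ∧
    (∀ j k, 2 ≤ j → j ≤ c + 1 → 2 ≤ k → k ≤ c + 1 → j ≠ k → Disjoint (W j) (W k)) ∧
    (W i).Nonempty ∧
    (∀ j, 2 ≤ j → j ≤ c + 1 → j ≠ i → ∃ u ∈ W j, ∃ w ∈ W j, u ≠ w) ∧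
    (∀ j k, 2 ≤ j → j < k → k ≤ c + 1 → ∀ u ∈ W j, ∀ w ∈ W k, D.Adj u w ∧ ¬ D.Adj w u) ∧
    (∀ j, 2 ≤ j → j ≤ c + 1 → ∀ u ∈ W j, ∀ w ∈ W j, ¬ D.Adj u w) ∧
    (∀ j, 2 ≤ j → j ≤ c + 1 → j ≠ i → ∀ u ∈ W j, Xor' (D.Adj v1 u) (D.Adj u v1)) ∧
    (∀ u ∈ W i, ¬ D.Adj v1 u ∧ ¬ D.Adj u v1) ∧
    ¬ D.Adj v1 v1

end MPT

open MPT

/-- For `c ≥ 8`, every member of the family `ℋ` has no `(c+2)`-cycle. -/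
theorem stmt_1 {V : Type*} (c : ℕ) (hc : 8 ≤ c) (D : Digraph V)
    (hH : IsInH D c) : ¬ HasCycle D (c + 2) := by
  rintro ⟨f, hfinj, hfadj⟩
  obtain ⟨i, hi2, hic, W, v1, hcov, hv1not, hdisj, hWi, hbig, harc, hins, hxor, hiso, hloop⟩ := hH
  set P : V → ℕ → Prop := fun v j => 2 ≤ j ∧ j ≤ c + 1 ∧ v ∈ W j with hP
  have hstep : ∀ u w : V, D.Adj u w → ∀ j k, P u j → P w k → j < k := by
    rintro u w hadj j k ⟨hj2, hjc, hju⟩ ⟨hk2, hkc, hkw⟩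
    rcases lt_trichotomy j k with h | h | h
    · exact h
    · exact absurd hadj (hins j hj2 hjc u hju w (h ▸ hkw))
    · exact absurd hadj (harc k j hk2 h hjc w hkw u hju).2
  have hex : ∀ v : V, v ≠ v1 → ∃ j, P v j := by
    intro v hv
    rcases hcov v with h | h
    · exact absurd h hv
    · exact h
  have chain : ∀ (g : ℕ → V) (N : ℕ), (∀ k, k < N → D.Adj (g k) (g (k + 1))) →
      (∀ k, k ≤ N → g k ≠ v1) → ∀ k, k ≤ N → ∃ j, P (g k) j ∧ 2 + k ≤ j := by
    intro g N hadj hne k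
    induction k with
    | zero =>
      intro _
      obtain ⟨j, hj⟩ := hex (g 0) (hne 0 (Nat.zero_le _))
      exact ⟨j, hj, by omega⟩
    | succ k ih =>
      intro hk
      obtain ⟨j, hPj, hjk⟩ := ih (by omega)
      obtain ⟨j', hPj'⟩ := hex (g (k + 1)) (hne _ hk)
      have := hstep _ _ (hadj k (by omega)) j j' hPj hPj'
      exact ⟨j', hPj', by omega⟩
  by_cases hv1 : ∃ i0 : ZMod (c + 2), f i0 = v1
  · obtain ⟨i0, hi0⟩ := hv1
    have : NeZero (c + 2) := ⟨by omega⟩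
    set g : ℕ → V := fun k => f (i0 + 1 + (k : ZMod (c + 2))) with hg
    have hne : ∀ k, k ≤ c → g k ≠ v1 := by
      intro k hk hgk
      have heq : f (i0 + 1 + (k : ZMod (c + 2))) = f i0 := hgk.trans hi0.symm
      have h1 : i0 + 1 + (k : ZMod (c + 2)) = i0 := hfinj heq
      have h2 : ((1 + k : ℕ) : ZMod (c + 2)) = 0 := by
        push_cast
        have : i0 + (1 + (k : ZMod (c + 2))) = i0 + 0 := by
          rw [add_zero, ← add_assoc]; exact h1
        exact add_left_cancel this
      rw [ZMod.natCast_eq_zero_iff] at h2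
      have := Nat.le_of_dvd (by omega) h2
      omega
    have hadjg : ∀ k, k < c → D.Adj (g k) (g (k + 1)) := by
      intro k hk
      have : g (k + 1) = f (i0 + 1 + (k : ZMod (c + 2)) + 1) := by
        rw [hg]; push_cast; ring_nf
      rw [this]
      exact hfadj _
    obtain ⟨j, ⟨_, hjc, _⟩, hj⟩ := chain g c hadjg hne c le_rfl
    omega
  · push_neg at hv1
    have hne : ∀ k, k ≤ c + 1 → (fun k : ℕ => f (k : ZMod (c + 2))) k ≠ v1 := by
      intro k _; exact hv1 _
    have hadjg : ∀ k, k < c + 1 →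
        D.Adj ((fun k : ℕ => f (k : ZMod (c + 2))) k) ((fun k : ℕ => f (k : ZMod (c + 2))) (k + 1)) := by
      intro k _
      have : ((k + 1 : ℕ) : ZMod (c + 2)) = (k : ZMod (c + 2)) + 1 := by push_cast; ring
      simp only [this]
      exact hfadj _
    obtain ⟨j, ⟨_, hjc, _⟩, hj⟩ := chain _ (c + 1) hadjg hne (c + 1) le_rfl
    omega
end

section
/- Let c ≥ 8 and m ≥ c. Every c-partite tournament that is a member of the family 𝒬_m = 𝒬^1_m ∪ 𝒬^2_m contains no (c+2)-cycle. -/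
open MPT

/-!
A `(c+2)`-cycle of a member of `𝒬_m` is read as a closed walk `G` on the path indices
`1, …, m` which steps up by one or drops by at least two, and which revisits only blown-up
indices; in `𝒬²_m` the reversed arc enters a sink or leaves a source, so it is never used.
The drops have total length `c + 2 - #drops`, and a single drop of length `c + 1` would join
congruent indices, so there are at least two drops. A drop leaves a blown-up index or the
maximum of `G` and lands on a blown-up index or its minimum, and two drops passing a common
level `v` force `v` and `v + 1` to be blown up (the walk must climb through `v` twice).
The blown-up indices lie in `{1, …, 4} ∪ {m - 3, …, m}`, which leaves room for at most one
drop `4 → 2`, one drop `m - 1 → m - 3` and one long drop. The length count, together with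
the congruences that allow the extra blow-ups, then rules out every combination of these.
-/

theorem Nat.ModEq.eq_of_lt_add {n a b : ℕ} (h : a ≡ b [MOD n]) (hab : a < b + n)
    (hba : b < a + n) : a = b :=
  h.eq_of_abs_lt (abs_lt.2 ⟨by omega, by omega⟩)

theorem Function.Periodic.exists_lt_le_add_eq {α : Type*} {f : ℕ → α} {n : ℕ}
    (hf : Function.Periodic f n) (hn : 0 < n) (a x : ℕ) :
    ∃ y, a < y ∧ y ≤ a + n ∧ f y = f x := by
  induction a with
  | zero =>
    by_cases hx : x % n = 0
    · exact ⟨n, hn, by omega, by rw [hf.eq, ← hx, hf.map_mod_nat]⟩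
    · exact ⟨x % n, by omega, (Nat.mod_lt x hn).le.trans (by omega), hf.map_mod_nat x⟩
  | succ a ih =>
    obtain ⟨y, hay, hya, hy⟩ := ih
    by_cases h : a + 1 < y
    · exact ⟨y, h, by omega, hy⟩
    · exact ⟨y + n, by omega, by omega, by rw [hf y, hy]⟩

section Climb

variable {n : ℕ} {G : ℕ → ℕ} {R : ℕ → Prop}

theorem exists_upcrossing (hup : ∀ i, G (i + 1) ≤ G i + 1) {a b v : ℕ} (hab : a ≤ b)
    (ha : G a ≤ v) (hb : v < G b) : ∃ j, a ≤ j ∧ j < b ∧ G j = v ∧ G (j + 1) = v + 1 := by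
  induction b, hab using Nat.le_induction with
  | base => omega
  | succ b hab ih =>
    by_cases hv : v < G b
    · obtain ⟨j, hj⟩ := ih hv
      exact ⟨j, by omega⟩
    · exact ⟨b, hab, by have := hup b; omega, by have := hup b; omega⟩

theorem Function.Periodic.sum_sub_succ_eq (hG : Function.Periodic G n) {S : Finset ℕ}
    (hS : S ⊆ Finset.range n) (hup : ∀ i < n, i ∉ S → G (i + 1) = G i + 1) :
    ∑ i ∈ S, ((G i : ℤ) - G (i + 1)) = n - S.card := by
  have htotal : ∑ i ∈ Finset.range n, ((G i : ℤ) - G (i + 1)) = 0 := by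
    rw [Finset.sum_range_sub', hG.eq, sub_self]
  have hrest :
      ∑ i ∈ Finset.range n \ S, ((G i : ℤ) - G (i + 1)) = -(Finset.range n \ S).card := by
    rw [Finset.sum_congr rfl fun i hi => ?_, Finset.sum_const, nsmul_eq_mul, mul_neg_one]
    simp only [Finset.mem_sdiff, Finset.mem_range] at hi
    rw [hup i hi.1 hi.2]
    push_cast
    ring
  have hcard := Finset.card_sdiff_add_card_eq_card hS
  rw [← Finset.sum_sdiff hS, hrest] at htotal
  rw [Finset.card_range] at hcard
  omega

theorem Function.Periodic.mem_of_drop_of_lt (hG : Function.Periodic G n) (hn : 0 < n)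
    (hup : ∀ i, G (i + 1) ≤ G i + 1) (hR : ∀ i j, i < j → j < i + n → G i = G j → R (G i))
    {i q : ℕ} (hi : G (i + 1) ≤ G i) (hq : G i < G q) : R (G i) := by
  obtain ⟨y, hiy, hyi, hy⟩ := hG.exists_lt_le_add_eq hn i q
  obtain ⟨j, hij, hjy, hj, -⟩ :=
    exists_upcrossing hup (show i + 1 ≤ y by omega) hi (hy ▸ hq)
  exact hR i j (by omega) (by omega) hj.symm

theorem Function.Periodic.mem_succ_of_drop_of_gt (hG : Function.Periodic G n) (hn : 0 < n)
    (hup : ∀ i, G (i + 1) ≤ G i + 1) (hR : ∀ i j, i < j → j < i + n → G i = G j → R (G i))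
    {i q : ℕ} (hi : G (i + 1) ≤ G i) (hq : G q < G (i + 1)) : R (G (i + 1)) := by
  obtain ⟨y, hiy, hyi, hy⟩ := hG.exists_lt_le_add_eq hn (i + 1) q
  have hper : G (i + 1 + n) = G (i + 1) := hG _
  obtain ⟨j, hyj, hjn, hj, hj1⟩ := exists_upcrossing hup (a := y) (b := i + 1 + n)
    (v := G (i + 1) - 1) hyi (by omega) (by omega)
  have hjn' : j ≠ i + n := by
    rintro rfl
    have := hG i
    omega
  exact hR (i + 1) (j + 1) (by omega) (by omega) (by omega)

theorem Function.Periodic.mem_of_two_drops (hG : Function.Periodic G n)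
    (hup : ∀ i, G (i + 1) ≤ G i + 1) (hR : ∀ i j, i < j → j < i + n → G i = G j → R (G i))
    {i j v : ℕ} (hij : i < j) (hji : j < i + n) (hvi : G (i + 1) ≤ v) (hiv : v < G i)
    (hvj : G (j + 1) ≤ v) (hjv : v < G j) : R v ∧ R (v + 1) := by
  obtain ⟨k, hik, hkj, hk, hk1⟩ := exists_upcrossing hup (show i + 1 ≤ j by omega) hvi hjv
  obtain ⟨l, hjl, hli, hl, hl1⟩ := exists_upcrossing hup (show j + 1 ≤ i + n by omega) hvj
    (by rwa [hG i])
  exact ⟨hk ▸ hR k l (by omega) (by omega) (hk.trans hl.symm),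
    hk1 ▸ hR (k + 1) (l + 1) (by omega) (by omega) (hk1.trans hl1.symm)⟩

end Climb

namespace MPT

theorem ModEqPair.swap {n i j s t : ℕ} (h : ModEqPair n i j s t) : ModEqPair n j i s t :=
  h.symm.imp And.symm And.symm

theorem ModEqPair.congr_right {n i j j' s t : ℕ} (h : ModEqPair n i j s t)
    (hj : j' ≡ j [MOD n]) : ModEqPair n i j' s t :=
  h.imp (fun h => ⟨h.1, hj.trans h.2⟩) (fun h => ⟨h.1, hj.trans h.2⟩)

theorem not_modEqPair_sub_two_and_sub_three {c m s t : ℕ} (hm : 3 ≤ m) (hs : 1 ≤ s)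
    (hst : s < t) (ht : t ≤ c + 1) (h₂ : ModEqPair (c + 1) m (m - 2) s t)
    (h₃ : ModEqPair (c + 1) m (m - 3) s t) : False := by
  rcases h₂ with ⟨h₂, h₂'⟩ | ⟨h₂, h₂'⟩ <;> rcases h₃ with ⟨h₃, h₃'⟩ | ⟨h₃, h₃'⟩
  · have := (h₂'.trans h₃'.symm).eq_of_lt_add (by omega) (by omega); omega
  · have := (h₂.symm.trans h₃).eq_of_lt_add (by omega) (by omega); omega
  · have := (h₃.symm.trans h₂).eq_of_lt_add (by omega) (by omega); omega
  · have := (h₂'.trans h₃'.symm).eq_of_lt_add (by omega) (by omega); omega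

namespace QBlowup

variable {c m s t v : ℕ}

theorem le_four_or_le_add_three (h : QBlowup c m s t v) : v ≤ 4 ∨ m ≤ v + 3 := by
  rcases h with h | h | h | h | ⟨-, ht | ht, h⟩ | ⟨h, -⟩ | ⟨h, -⟩ <;> omega

theorem eq_one_and_eq_three (hm : 7 ≤ m) (h : QBlowup c m s t 3) : s = 1 ∧ t = 3 := by
  rcases h with h | h | h | h | ⟨hs, -, ht⟩ | ⟨h, -⟩ | ⟨h, -⟩ <;> omega

theorem eq_one_and_eq_four (hm : 8 ≤ m) (h : QBlowup c m s t 4) : s = 1 ∧ t = 4 := by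
  rcases h with h | h | h | h | ⟨hs, -, ht⟩ | ⟨h, -⟩ | ⟨h, -⟩ <;> omega

theorem of_five_le (h : QBlowup c m s t v) (hv : 5 ≤ v) :
    v = m - 1 ∨ v = m ∨ (v = m - 2 ∧ ModEqPair (c + 1) m (m - 2) s t) ∨
      (v = m - 3 ∧ ModEqPair (c + 1) m (m - 3) s t) := by
  rcases h with h | h | h | h | ⟨-, ht | ht, h⟩ | h | h
  all_goals first | omega | tauto

theorem not_four_and_five (hc : 7 ≤ c) (hm : 8 ≤ m) (h₄ : QBlowup c m s t 4)
    (h₅ : QBlowup c m s t 5) : False := by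
  obtain ⟨rfl, rfl⟩ := h₄.eq_one_and_eq_four hm
  rcases h₅.of_five_le le_rfl with h | h | ⟨h, -⟩ | ⟨h, h₃ | h₃⟩
  any_goals omega
  · have := h₃.1.eq_of_lt_add (by omega) (by omega); omega
  · have := h₃.1.eq_of_lt_add (by omega) (by omega); omega

end QBlowup

/-- The indices `i` with `f k ∈ A i` along a `(c+2)`-cycle `f` of a member of `𝒬¹_m`,
read with period `c + 2`. -/
structure IsQWalk (c m s t : ℕ) (G : ℕ → ℕ) : Prop where
  periodic : Function.Periodic G (c + 2)
  one_le : ∀ i, 1 ≤ G i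
  le : ∀ i, G i ≤ m
  arc : ∀ i, QArc c s t (G i) (G (i + 1))
  mem_of_eq : ∀ i j, i < j → j < i + (c + 2) → G i = G j → QBlowup c m s t (G i)

def IsLowDrop (c m s t : ℕ) (G : ℕ → ℕ) (i : ℕ) : Prop :=
  G (i + 1) < G i ∧ QBlowup c m s t (G i) ∧ G i ≤ 4

def IsHighDrop (c m s t : ℕ) (G : ℕ → ℕ) (i : ℕ) : Prop :=
  G (i + 1) < G i ∧ QBlowup c m s t (G (i + 1)) ∧ 5 ≤ G (i + 1)

namespace IsQWalk

variable {c m s t : ℕ} {G : ℕ → ℕ}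

theorem succ_le (hG : IsQWalk c m s t G) (i : ℕ) : G (i + 1) ≤ G i + 1 := by
  rcases (hG.arc i).1 with h | h <;> omega

theorem eq_succ_of_not_lt (hG : IsQWalk c m s t G) {i : ℕ} (h : ¬ G (i + 1) < G i) :
    G (i + 1) = G i + 1 := by
  rcases (hG.arc i).1 with h' | h' <;> omega

theorem add_two_le_of_lt (hG : IsQWalk c m s t G) {i : ℕ} (h : G (i + 1) < G i) :
    G (i + 1) + 2 ≤ G i := by
  rcases (hG.arc i).1 with h' | h' <;> omega

theorem mem_of_ne (hG : IsQWalk c m s t G) {i j : ℕ} (hij : i ≠ j) (hi : i < j + (c + 2))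
    (hj : j < i + (c + 2)) (h : G i = G j) : QBlowup c m s t (G i) := by
  rcases Nat.lt_or_gt_of_ne hij with hij | hji
  · exact hG.mem_of_eq i j hij (by omega) h
  · exact h ▸ hG.mem_of_eq j i hji (by omega) h.symm

theorem mem_or_forall_le (hG : IsQWalk c m s t G) {i : ℕ} (hi : G (i + 1) < G i) :
    QBlowup c m s t (G i) ∨ ∀ q, G q ≤ G i := by
  by_contra! ⟨hB, q, hq⟩
  exact hB (hG.periodic.mem_of_drop_of_lt (by omega) hG.succ_le hG.mem_of_eq hi.le hq)

theorem mem_or_forall_ge (hG : IsQWalk c m s t G) {i : ℕ} (hi : G (i + 1) < G i) :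
    QBlowup c m s t (G (i + 1)) ∨ ∀ q, G (i + 1) ≤ G q := by
  by_contra! ⟨hB, q, hq⟩
  exact hB (hG.periodic.mem_succ_of_drop_of_gt (by omega) hG.succ_le hG.mem_of_eq hi.le hq)

theorem mem_of_two_drops (hG : IsQWalk c m s t G) {i j v : ℕ} (hi : i < c + 2) (hj : j < c + 2)
    (hij : i ≠ j) (hvi : G (i + 1) ≤ v) (hiv : v < G i) (hvj : G (j + 1) ≤ v) (hjv : v < G j) :
    QBlowup c m s t v ∧ QBlowup c m s t (v + 1) := by
  rcases Nat.lt_or_gt_of_ne hij with hij | hji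
  · exact hG.periodic.mem_of_two_drops hG.succ_le hG.mem_of_eq hij (by omega) hvi hiv hvj hjv
  · exact hG.periodic.mem_of_two_drops hG.succ_le hG.mem_of_eq hji (by omega) hvj hjv hvi hiv

theorem sum_eq (hG : IsQWalk c m s t G) {S : Finset ℕ} (hS : S ⊆ Finset.range (c + 2))
    (hall : ∀ i < c + 2, G (i + 1) < G i → i ∈ S) :
    ∑ i ∈ S, ((G i : ℤ) - G (i + 1)) = c + 2 - S.card := by
  have := hG.periodic.sum_sub_succ_eq hS fun i hi hiS =>
    hG.eq_succ_of_not_lt fun hd => hiS (hall i hi hd)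
  exact_mod_cast this

/-- A single drop would have length `c + 1`, joining two indices congruent mod `c + 1`. -/
theorem exists_drop_ne (hG : IsQWalk c m s t G) (k : ℕ) :
    ∃ i < c + 2, i ≠ k ∧ G (i + 1) < G i := by
  by_contra! hk
  by_cases hdk : k < c + 2 ∧ G (k + 1) < G k
  · have hsum := hG.sum_eq (S := {k}) (by simpa using hdk.1) fun i hi hd => by
      by_contra hik
      exact (hk i hi (by simpa using hik)).not_gt hd
    simp only [Finset.sum_singleton, Finset.card_singleton] at hsum
    rcases (hG.arc k).1 with h | ⟨-, hmod⟩
    · omega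
    · exact hmod (by rw [show G k = G (k + 1) + (c + 1) by omega]; exact Nat.add_mod_right _ _)
  · have hsum := hG.sum_eq (S := ∅) (by simp) fun i hi hd => by
      by_cases hik : i = k
      · exact absurd ⟨hik ▸ hi, hik ▸ hd⟩ hdk
      · exact absurd hd (hk i hi hik).not_gt
    simp only [Finset.sum_empty, Finset.card_empty] at hsum
    omega

theorem apply_eq_of_isLowDrop (hG : IsQWalk c m s t G) (hm : 8 ≤ m) {i : ℕ}
    (h : IsLowDrop c m s t G i) :
    G i = 4 ∧ G (i + 1) = 2 ∧ s = 1 ∧ t = 4 := by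
  obtain ⟨hd, hB, h4⟩ := h
  have := hG.add_two_le_of_lt hd
  have := hG.one_le (i + 1)
  have hpair := (hG.arc i).2
  obtain h3 | h4 : G i = 3 ∨ G i = 4 := by omega
  · obtain ⟨rfl, rfl⟩ := (h3 ▸ hB).eq_one_and_eq_three (by omega)
    exact absurd (Or.inr ⟨by rw [h3], by rw [show G (i + 1) = 1 by omega]⟩) hpair
  · obtain ⟨rfl, rfl⟩ := (h4 ▸ hB).eq_one_and_eq_four hm
    obtain h1 | h2 : G (i + 1) = 1 ∨ G (i + 1) = 2 := by omega
    · exact absurd (Or.inr ⟨by rw [h4], by rw [h1]⟩) hpair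
    · exact ⟨h4, h2, rfl, rfl⟩

theorem apply_eq_of_isHighDrop (hG : IsQWalk c m s t G) {i : ℕ} (h : IsHighDrop c m s t G i) :
    G i = m - 1 ∧ G (i + 1) = m - 3 ∧ ModEqPair (c + 1) m (m - 3) s t := by
  obtain ⟨hd, hB, h5⟩ := h
  have := hG.add_two_le_of_lt hd
  have := hG.le i
  have hpair := (hG.arc i).2
  rcases hB.of_five_le h5 with h | h | ⟨h, h₂⟩ | ⟨h, h₃⟩
  · omega
  · omega
  · exact absurd (by rwa [show G i = m by omega, h]) hpair
  · obtain hm | hm : G i = m ∨ G i = m - 1 := by omega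
    · exact absurd (by rwa [hm, h]) hpair
    · exact ⟨hm, h, h₃⟩

theorem eq_of_isLowDrop (hG : IsQWalk c m s t G) (hm : 8 ≤ m) {i j : ℕ} (hi : i < c + 2)
    (hj : j < c + 2) (hli : IsLowDrop c m s t G i) (hlj : IsLowDrop c m s t G j) : i = j := by
  by_contra hij
  obtain ⟨hi4, hi2, -, ht⟩ := hG.apply_eq_of_isLowDrop hm hli
  obtain ⟨hj4, hj2, -, -⟩ := hG.apply_eq_of_isLowDrop hm hlj
  have := ((hG.mem_of_two_drops hi hj hij (v := 3) (by omega) (by omega) (by omega)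
    (by omega)).1.eq_one_and_eq_three (by omega)).2
  omega

theorem eq_of_isHighDrop (hG : IsQWalk c m s t G) (hm : 8 ≤ m) (hs : 1 ≤ s) (hst : s < t)
    (ht : t ≤ c + 1) {i j : ℕ} (hi : i < c + 2) (hj : j < c + 2)
    (hhi : IsHighDrop c m s t G i) (hhj : IsHighDrop c m s t G j) : i = j := by
  by_contra hij
  obtain ⟨hi1, hi3, h₃⟩ := hG.apply_eq_of_isHighDrop hhi
  obtain ⟨hj1, hj3, -⟩ := hG.apply_eq_of_isHighDrop hhj
  have hB := (hG.mem_of_two_drops hi hj hij (v := m - 2) (by omega) (by omega) (by omega)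
    (by omega)).1
  rcases hB.of_five_le (by omega) with h | h | ⟨-, h₂⟩ | ⟨h, -⟩
  any_goals omega
  exact not_modEqPair_sub_two_and_sub_three (by omega) hs hst ht h₂ h₃

/-- Either the drop from `i` leaves a blown-up index, or `G i` is the maximum of `G` and
dominates the start of the other drop. -/
theorem le_add_three_of_not_isLowDrop (hG : IsQWalk c m s t G) {i j : ℕ} (hi : i < c + 2)
    (hj : j < c + 2) (hij : i ≠ j) (hdi : G (i + 1) < G i) (hli : ¬ IsLowDrop c m s t G i)
    (hdj : G (j + 1) < G j) (hlj : ¬ IsLowDrop c m s t G j) : m ≤ G i + 3 := by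
  have key : ∀ k, G (k + 1) < G k → ¬ IsLowDrop c m s t G k → QBlowup c m s t (G k) →
      m ≤ G k + 3 := fun k hd hl hB =>
    hB.le_four_or_le_add_three.resolve_left fun h4 => hl ⟨hd, hB, h4⟩
  rcases hG.mem_or_forall_le hdi with hB | hmaxi
  · exact key i hdi hli hB
  rcases hG.mem_or_forall_le hdj with hB | hmaxj
  · have := key j hdj hlj hB
    have := hmaxi j
    omega
  · exact key i hdi hli
      (hG.mem_of_ne hij (by omega) (by omega) (le_antisymm (hmaxj i) (hmaxi j)))

theorem succ_le_four_of_not_isHighDrop (hG : IsQWalk c m s t G) {i j : ℕ} (hi : i < c + 2)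
    (hj : j < c + 2) (hij : i ≠ j) (hdi : G (i + 1) < G i) (hhi : ¬ IsHighDrop c m s t G i)
    (hdj : G (j + 1) < G j) (hhj : ¬ IsHighDrop c m s t G j) : G (i + 1) ≤ 4 := by
  have key : ∀ k, G (k + 1) < G k → ¬ IsHighDrop c m s t G k →
      QBlowup c m s t (G (k + 1)) → G (k + 1) ≤ 4 := fun k hd hh hB => by
    by_contra h5
    exact hh ⟨hd, hB, by omega⟩
  rcases hG.mem_or_forall_ge hdi with hB | hmini
  · exact key i hdi hhi hB
  rcases hG.mem_or_forall_ge hdj with hB | hminj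
  · have := key j hdj hhj hB
    have := hmini (j + 1)
    omega
  · exact key i hdi hhi (hG.mem_of_ne (j := j + 1) (by omega) (by omega) (by omega)
      (le_antisymm (hmini (j + 1)) (hminj (i + 1))))

theorem eq_of_not_isLowDrop_of_not_isHighDrop (hG : IsQWalk c m s t G) (hc : 7 ≤ c) (hm : 8 ≤ m)
    {i j : ℕ} (hi : i < c + 2) (hj : j < c + 2)
    (hdi : G (i + 1) < G i) (hli : ¬ IsLowDrop c m s t G i) (hhi : ¬ IsHighDrop c m s t G i)
    (hdj : G (j + 1) < G j) (hlj : ¬ IsLowDrop c m s t G j) (hhj : ¬ IsHighDrop c m s t G j) :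
    i = j := by
  by_contra hij
  have := hG.le_add_three_of_not_isLowDrop hi hj hij hdi hli hdj hlj
  have := hG.le_add_three_of_not_isLowDrop hj hi (Ne.symm hij) hdj hlj hdi hli
  have := hG.succ_le_four_of_not_isHighDrop hi hj hij hdi hhi hdj hhj
  have := hG.succ_le_four_of_not_isHighDrop hj hi (Ne.symm hij) hdj hhj hdi hhi
  obtain ⟨h₄, h₅⟩ := hG.mem_of_two_drops hi hj hij (v := 4) (by omega) (by omega) (by omega)
    (by omega)
  exact h₄.not_four_and_five hc hm h₅

theorem sum_pair_eq (hG : IsQWalk c m s t G) {x y : ℕ} (hx : x < c + 2) (hy : y < c + 2)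
    (hxy : x ≠ y) (hall : ∀ i < c + 2, G (i + 1) < G i → i = x ∨ i = y) :
    ((G x : ℤ) - G (x + 1)) + (G y - G (y + 1)) = c := by
  have := hG.sum_eq (S := {x, y}) (by simp [Finset.insert_subset_iff, hx, hy])
    fun i hi hd => by simpa using hall i hi hd
  rw [Finset.sum_pair hxy, Finset.card_pair hxy] at this
  push_cast at this
  linarith

theorem false_of_isLowDrop_of_isHighDrop_of_drop (hG : IsQWalk c m s t G) (hc : 8 ≤ c)
    (hm : c ≤ m) {ℓ h β : ℕ} (hℓ : ℓ < c + 2) (hh : h < c + 2) (hβ : β < c + 2)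
    (hlow : IsLowDrop c m s t G ℓ) (hhigh : IsHighDrop c m s t G h) (hdβ : G (β + 1) < G β)
    (hlβ : ¬ IsLowDrop c m s t G β) (hhβ : ¬ IsHighDrop c m s t G β) : False := by
  have hm8 : 8 ≤ m := by omega
  obtain ⟨hℓ4, hℓ2, rfl, rfl⟩ := hG.apply_eq_of_isLowDrop hm8 hlow
  obtain ⟨hh1, hh3, h₃⟩ := hG.apply_eq_of_isHighDrop hhigh
  have hℓh : ℓ ≠ h := by
    rintro rfl
    omega
  have hβℓ : β ≠ ℓ := by
    rintro rfl
    exact hlβ hlow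
  have hβh : β ≠ h := by
    rintro rfl
    exact hhβ hhigh
  have hsum := hG.sum_eq (S := {ℓ, h, β}) (by simp [Finset.insert_subset_iff, *])
    fun d hd hdd => by
      by_cases hld : IsLowDrop c m 1 4 G d
      · simp [hG.eq_of_isLowDrop hm8 hd hℓ hld hlow]
      by_cases hhd : IsHighDrop c m 1 4 G d
      · simp [hG.eq_of_isHighDrop hm8 le_rfl (by omega) (by omega) hd hh hhd hhigh]
      · simp [hG.eq_of_not_isLowDrop_of_not_isHighDrop (by omega) hm8 hd hβ hdd hld hhd hdβ hlβ
          hhβ]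
  rw [Finset.sum_insert (by simp [hℓh, hβℓ.symm]), Finset.sum_pair hβh.symm,
    Finset.card_insert_of_notMem (by simp [hℓh, hβℓ.symm]), Finset.card_pair hβh.symm] at hsum
  have := hG.le_add_three_of_not_isLowDrop hβ hh hβh hdβ hlβ hhigh.1 fun hl => by
    have := hG.apply_eq_of_isLowDrop hm8 hl
    omega
  have := hG.succ_le_four_of_not_isHighDrop hβ hℓ hβℓ hdβ hhβ hlow.1 fun hh' => by
    have := hG.apply_eq_of_isHighDrop hh'
    omega
  -- the three drops have total length `c - 1`, which forces `m ≤ c + 2`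
  rcases h₃ with ⟨-, h⟩ | ⟨h, -⟩
  · have := h.eq_of_lt_add (by omega) (by omega)
    omega
  · have := h.eq_of_lt_add (by omega) (by omega)
    omega

theorem false_of_isLowDrop_of_isHighDrop (hG : IsQWalk c m s t G) (hc : 8 ≤ c) (hm : c ≤ m)
    {ℓ h : ℕ} (hℓ : ℓ < c + 2) (hh : h < c + 2) (hlow : IsLowDrop c m s t G ℓ)
    (hhigh : IsHighDrop c m s t G h) : False := by
  have hm8 : 8 ≤ m := by omega
  by_cases hbig : ∃ β < c + 2, G (β + 1) < G β ∧ ¬ IsLowDrop c m s t G β ∧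
      ¬ IsHighDrop c m s t G β
  · obtain ⟨β, hβ, hdβ, hlβ, hhβ⟩ := hbig
    exact hG.false_of_isLowDrop_of_isHighDrop_of_drop hc hm hℓ hh hβ hlow hhigh hdβ hlβ hhβ
  push Not at hbig
  obtain ⟨hℓ4, hℓ2, rfl, rfl⟩ := hG.apply_eq_of_isLowDrop hm8 hlow
  obtain ⟨hh1, hh3, -⟩ := hG.apply_eq_of_isHighDrop hhigh
  have := hG.sum_pair_eq hℓ hh (by rintro rfl; omega) fun d hd hdd => by
    by_cases hld : IsLowDrop c m 1 4 G d
    · exact Or.inl (hG.eq_of_isLowDrop hm8 hd hℓ hld hlow)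
    · exact Or.inr (hG.eq_of_isHighDrop hm8 le_rfl (by omega) (by omega) hd hh
        (hbig d hd hdd hld) hhigh)
  omega

theorem false_of_isLowDrop_of_forall_not_isHighDrop (hG : IsQWalk c m s t G) (hc : 8 ≤ c)
    (hm : c ≤ m) {ℓ β : ℕ} (hℓ : ℓ < c + 2) (hβ : β < c + 2) (hβℓ : β ≠ ℓ)
    (hlow : IsLowDrop c m s t G ℓ) (hdβ : G (β + 1) < G β)
    (hnh : ∀ i < c + 2, ¬ IsHighDrop c m s t G i) : False := by
  have hm8 : 8 ≤ m := by omega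
  have hlβ : ¬ IsLowDrop c m s t G β := fun h => hβℓ (hG.eq_of_isLowDrop hm8 hβ hℓ h hlow)
  obtain ⟨hℓ4, hℓ2, rfl, rfl⟩ := hG.apply_eq_of_isLowDrop hm8 hlow
  have hsum := hG.sum_pair_eq hℓ hβ hβℓ.symm fun d hd hdd => by
    by_cases hld : IsLowDrop c m 1 4 G d
    · exact Or.inl (hG.eq_of_isLowDrop hm8 hd hℓ hld hlow)
    · exact Or.inr (hG.eq_of_not_isLowDrop_of_not_isHighDrop (by omega) hm8 hd hβ hdd hld
        (hnh d hd) hdβ hlβ (hnh β hβ))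
  have := hG.add_two_le_of_lt hdβ
  have hb : G (β + 1) ≤ 2 ∨ G (β + 1) = 4 := by
    rcases hG.mem_or_forall_ge hdβ with hB | hmin
    · have : G (β + 1) ≤ 4 := by
        by_contra h5
        exact hnh β hβ ⟨hdβ, hB, by omega⟩
      have : G (β + 1) ≠ 3 := fun h3 => by
        have := ((h3 ▸ hB).eq_one_and_eq_three (by omega)).2
        omega
      omega
    · have := hmin (ℓ + 1)
      omega
  rcases hb with hb | hb
  -- both drops pass level `2`, so `3` would be blown up
  · have := ((hG.mem_of_two_drops hℓ hβ hβℓ.symm (v := 2) (by omega) (by omega) (by omega)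
      (by omega)).2.eq_one_and_eq_three (by omega)).2
    omega
  -- the length count gives `G β = c + 2 ≡ 1`, so `β` is an arc between the classes of `1` and `4`
  · refine (hG.arc β).2 (Or.inl ⟨?_, by rw [hb]⟩)
    rw [show G β = 1 + (c + 1) by omega]
    exact Nat.add_mod_right _ _

theorem false_of_isHighDrop_of_forall_not_isLowDrop (hG : IsQWalk c m s t G) (hc : 8 ≤ c)
    (hm : c ≤ m) (hs : 1 ≤ s) (hst : s < t) (ht : t ≤ c + 1) {h β : ℕ} (hh : h < c + 2)
    (hβ : β < c + 2) (hβh : β ≠ h) (hhigh : IsHighDrop c m s t G h) (hdβ : G (β + 1) < G β)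
    (hnl : ∀ i < c + 2, ¬ IsLowDrop c m s t G i) : False := by
  have hm8 : 8 ≤ m := by omega
  have hhβ : ¬ IsHighDrop c m s t G β := fun hb =>
    hβh (hG.eq_of_isHighDrop hm8 hs hst ht hβ hh hb hhigh)
  obtain ⟨hh1, hh3, h₃⟩ := hG.apply_eq_of_isHighDrop hhigh
  have hsum := hG.sum_pair_eq hh hβ hβh.symm fun d hd hdd => by
    by_cases hhd : IsHighDrop c m s t G d
    · exact Or.inl (hG.eq_of_isHighDrop hm8 hs hst ht hd hh hhd hhigh)
    · exact Or.inr (hG.eq_of_not_isLowDrop_of_not_isHighDrop (by omega) hm8 hd hβ hdd (hnl d hd)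
        hhd hdβ (hnl β hβ) hhβ)
  have := hG.add_two_le_of_lt hdβ
  have := hG.le β
  have ha : m - 1 ≤ G β ∨ G β = m - 3 := by
    rcases hG.mem_or_forall_le hdβ with hB | hmax
    · have h5 : 5 ≤ G β := by
        by_contra h4
        exact hnl β hβ ⟨hdβ, hB, by omega⟩
      rcases hB.of_five_le h5 with ha | ha | ⟨-, h₂⟩ | ⟨ha, -⟩
      · omega
      · omega
      · exact (not_modEqPair_sub_two_and_sub_three (by omega) hs hst ht h₂ h₃).elim
      · omega
    · have := hmax h
      omega
  rcases ha with ha | ha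
  -- both drops pass level `m - 2`, which cannot be blown up alongside `m - 3`
  · have hB := (hG.mem_of_two_drops hh hβ hβh.symm (v := m - 2) (by omega) (by omega) (by omega)
      (by omega)).1
    rcases hB.of_five_le (by omega) with h | h | ⟨-, h₂⟩ | ⟨h, -⟩
    any_goals omega
    exact not_modEqPair_sub_two_and_sub_three (by omega) hs hst ht h₂ h₃
  -- the length count gives `G (β + 1) = m - (c + 1)`
  · have hmod : G (β + 1) ≡ m [MOD c + 1] := by
      rw [show m = G (β + 1) + (c + 1) by omega]
      exact (Nat.add_mod_right _ _).symm
    exact (hG.arc β).2 (ha ▸ h₃.swap.congr_right hmod)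

end IsQWalk

theorem not_isQWalk {c m s t : ℕ} {G : ℕ → ℕ} (hc : 8 ≤ c) (hm : c ≤ m) (hs : 1 ≤ s)
    (hst : s + 1 < t) (ht : t ≤ c + 1) : ¬ IsQWalk c m s t G := by
  intro hG
  by_cases hL : ∃ ℓ < c + 2, IsLowDrop c m s t G ℓ
  · obtain ⟨ℓ, hℓ, hlow⟩ := hL
    by_cases hH : ∃ h < c + 2, IsHighDrop c m s t G h
    · obtain ⟨h, hh, hhigh⟩ := hH
      exact hG.false_of_isLowDrop_of_isHighDrop hc hm hℓ hh hlow hhigh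
    · push Not at hH
      obtain ⟨β, hβ, hβℓ, hdβ⟩ := hG.exists_drop_ne ℓ
      exact hG.false_of_isLowDrop_of_forall_not_isHighDrop hc hm hℓ hβ hβℓ hlow hdβ hH
  · push Not at hL
    by_cases hH : ∃ h < c + 2, IsHighDrop c m s t G h
    · obtain ⟨h, hh, hhigh⟩ := hH
      obtain ⟨β, hβ, hβh, hdβ⟩ := hG.exists_drop_ne h
      exact hG.false_of_isHighDrop_of_forall_not_isLowDrop hc hm hs (by omega) ht hh hβ hβh hhigh
        hdβ hL
    · push Not at hH
      obtain ⟨i, hi, -, hdi⟩ := hG.exists_drop_ne 0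
      obtain ⟨j, hj, hji, hdj⟩ := hG.exists_drop_ne i
      exact hji (hG.eq_of_not_isLowDrop_of_not_isHighDrop (by omega) (by omega) hj hi hdj (hL j hj)
        (hH j hj) hdi (hL i hi) (hH i hi))


theorem IsBlowupOf.exists_index_walk {V : Type*} {D : Digraph V} {m n : ℕ} [NeZero n]
    {arc : ℕ → ℕ → Prop} {allowed : ℕ → Prop} (hD : IsBlowupOf D m arc allowed)
    (hC : HasCycle D n) :
    ∃ G : ℕ → ℕ, Function.Periodic G n ∧ (∀ i, 1 ≤ G i ∧ G i ≤ m) ∧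
      (∀ i, arc (G i) (G (i + 1))) ∧
      ∀ i j, i < j → j < i + n → G i = G j → allowed (G i) := by
  obtain ⟨A, hcov, -, -, hsub, hadj⟩ := hD
  obtain ⟨f, hf, hfadj⟩ := hC
  choose idx hidx₁ hidx₂ hmem using hcov
  refine ⟨fun i => idx (f i), fun i => by simp, fun i => ⟨hidx₁ _, hidx₂ _⟩, fun i => ?_,
    fun i j hij hji heq => ?_⟩
  · exact (hadj _ _ (hidx₁ _) (hidx₂ _) (hidx₁ _) (hidx₂ _) _ (hmem _) _ (hmem _)).1
      (by simpa using hfadj i)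
  · by_contra hna
    have hj : f j ∈ A (idx (f i)) := by
      rw [show idx (f i) = idx (f j) from heq]
      exact hmem _
    have := (ZMod.natCast_eq_natCast_iff _ _ _).1
      (hf (hsub _ (hidx₁ _) (hidx₂ _) hna (hmem _) hj))
    have := this.eq_of_lt_add (by omega) (by omega)
    omega

/-- The arc `a → b` that gets reversed was the only out-arc of `a ≤ 2` or the only in-arc of
`b ≥ m - 1`. -/
theorem QRevCase.isSink_or_isSource {c m s t a b : ℕ} (h : QRevCase c m s t a b) (hm : 2 ≤ m) :
    (∀ y, 1 ≤ y → ¬ QArcRev c s t a b a y) ∨ (∀ x, x ≤ m → ¬ QArcRev c s t a b x b) := by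
  obtain ⟨rfl, ha | hb⟩ : b = a + 1 ∧ (a ≤ 2 ∨ m ≤ b + 1) := by
    rcases h with ⟨-, -, rfl, rfl⟩ | ⟨-, -, rfl, rfl⟩ | ⟨-, rfl, rfl⟩ | ⟨-, rfl, rfl⟩ <;> omega
  · left
    rintro y hy (⟨⟨hn, -⟩, harc, -⟩ | ⟨⟨h, -⟩, -⟩)
    · rcases harc with h | ⟨h, -⟩
      · exact hn ⟨rfl, h⟩
      · omega
    · omega
  · right
    rintro x hx (⟨⟨hn, -⟩, harc, -⟩ | ⟨⟨-, h⟩, -⟩)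
    · rcases harc with h | ⟨h, -⟩
      · exact hn ⟨by omega, rfl⟩
      · omega
    · omega

theorem QRevCase.qArc_of_qArcRev {c m s t a b n : ℕ} {G : ℕ → ℕ} (h : QRevCase c m s t a b)
    (hm : 2 ≤ m) (hn : 0 < n) (hG : Function.Periodic G n) (hbd : ∀ i, 1 ≤ G i ∧ G i ≤ m)
    (harc : ∀ i, QArcRev c s t a b (G i) (G (i + 1))) (i : ℕ) : QArc c s t (G i) (G (i + 1)) := by
  rcases harc i with ⟨-, h'⟩ | ⟨⟨hb, ha⟩, -⟩
  · exact h'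
  rcases h.isSink_or_isSource hm with hout | hin
  · exact (hout _ (hbd (i + 1 + 1)).1 (ha ▸ harc (i + 1))).elim
  · have hpred := harc (i + n - 1)
    rw [show i + n - 1 + 1 = i + n by omega, hG i, hb] at hpred
    exact (hin _ (hbd _).2 hpred).elim

end MPT

/-- For `c ≥ 8` and `m ≥ c`, every member of the family
`𝒬_m = 𝒬¹_m ∪ 𝒬²_m` has no `(c+2)`-cycle. -/
theorem stmt_2 {V : Type*} (c m : ℕ) (hc : 8 ≤ c) (hm : c ≤ m) (D : Digraph V)
    (hQ : IsInQ D c m) : ¬ HasCycle D (c + 2) := by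
  intro hC
  rcases hQ with ⟨s, t, hs, hst, ht, hD⟩ | ⟨s, t, a, b, hs, hst, ht, hrev, hD⟩
  · obtain ⟨G, hper, hbd, harc, hrep⟩ := hD.exists_index_walk hC
    exact not_isQWalk hc hm hs hst ht
      ⟨hper, fun i => (hbd i).1, fun i => (hbd i).2, harc, hrep⟩
  · obtain ⟨G, hper, hbd, harc, hrep⟩ := hD.exists_index_walk hC
    exact not_isQWalk hc hm hs hst ht ⟨hper, fun i => (hbd i).1, fun i => (hbd i).2,
      hrev.qArc_of_qArcRev (by omega) (by omega) hper hbd harc, hrep⟩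
end

section
/- Let c ≥ 8 and let D be a rich c-partite tournament with partite sets V_1, …, V_c that has no (c+2)-cycle, and suppose that for every (c+1)-cycle C′ of D, every vertex of D not on C′ lies in N^+(C′) ∩ N^-(C′). Let C = x_1x_2⋯x_i y_1 x_{i+1}⋯x_c x_1 be a (c+1)-cycle of D with x_j ∈ V_j for all j ∈ {1,…,c} and y_1 ∈ V_1. Then: (1) for every j with 2 ≤ j ≤ i−1, every vertex of V_2 ∪ ⋯ ∪ V_{j−1} dominates every vertex of V_j, and every vertex of V_j dominates every vertex of V_{j+1} ∪ ⋯ ∪ V_i; and (2) for every j with i+1 ≤ j ≤ c−1, every vertex of V_{i+1} ∪ ⋯ ∪ V_{j−1} dominates every vertex of V_j, and every vertex of V_j dominates every vertex of V_{j+1} ∪ ⋯ ∪ V_c. -/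
open MPT
section Stmt5Aux

variable {V : Type*} {c : ℕ} {D : Digraph V} {part : V → Fin c}

/-! ### Elementary ZMod helpers -/

private lemma zcast_inj {n a b : ℕ} (ha : a < n) (hb : b < n)
    (h : (a : ZMod n) = b) : a = b := by
  have h2 := (ZMod.natCast_eq_natCast_iff a b n).1 h
  rwa [Nat.ModEq, Nat.mod_eq_of_lt ha, Nat.mod_eq_of_lt hb] at h2

private lemma zcast_ne_zero {n m : ℕ} (h1 : 0 < m) (h2 : m < n) :
    (m : ZMod n) ≠ 0 := by
  intro h
  rw [ZMod.natCast_eq_zero_iff] at h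
  have := Nat.le_of_dvd h1 h
  omega

private lemma zshift_ne {c : ℕ} (σ : ZMod (c+1)) {m : ℕ} (h1 : 0 < m) (h2 : m < c+1) :
    σ + (m : ZMod (c+1)) ≠ σ := by
  intro h
  have h3 : (m : ZMod (c+1)) = 0 := by linear_combination h
  exact zcast_ne_zero h1 h2 h3

private lemma zval_succ {n : ℕ} (j : ZMod (n+1)) :
    (j.val < n ∧ (j+1).val = j.val + 1) ∨ (j.val = n ∧ j + 1 = 0) := by
  have hlt : j.val < n + 1 := ZMod.val_lt j
  have hj : ((j.val : ℕ) : ZMod (n+1)) = j := ZMod.natCast_rightInverse j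
  rcases Nat.lt_or_ge j.val n with h | h
  · refine Or.inl ⟨h, ?_⟩
    have e : j + 1 = ((j.val + 1 : ℕ) : ZMod (n+1)) := by
      rw [Nat.cast_add, Nat.cast_one, hj]
    rw [e, ZMod.val_cast_of_lt (by omega)]
  · have h' : j.val = n := by omega
    refine Or.inr ⟨h', ?_⟩
    have e : j + 1 = ((n + 1 : ℕ) : ZMod (n+1)) := by
      rw [Nat.cast_add, Nat.cast_one, ← hj, h']
    rw [e, ZMod.natCast_self]

private lemma notMem_range_update {α β : Type*} [DecidableEq α] {f : α → β} {s : α} {z y : β}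
    (hy : y ∉ Set.range f) (hyz : y ≠ z) : y ∉ Set.range (Function.update f s z) := by
  rintro ⟨t, ht⟩
  by_cases h : t = s
  · subst h; rw [Function.update_self] at ht; exact hyz ht.symm
  · rw [Function.update_of_ne h] at ht; exact hy ⟨t, ht⟩

/-! ### Building a `(c+2)`-cycle by replacing `k-1` consecutive vertices of a
`(c+1)`-cycle with a path of `k` new vertices. -/

private lemma hasCycle_of_insert (hno : ¬ HasCycle D (c+2))
    (f : ZMod (c+1) → V) (hinj : Function.Injective f)
    (harc : ∀ s, D.Adj (f s) (f (s+1)))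
    (k : ℕ) (hk1 : 1 ≤ k) (hkc : k ≤ c)
    (r : ℕ → V) (hroff : ∀ j, j < k → r j ∉ Set.range f)
    (hrinj : ∀ j1, j1 < k → ∀ j2, j2 < k → r j1 = r j2 → j1 = j2)
    (t0 : ZMod (c+1))
    (h0 : D.Adj (f t0) (r 0))
    (hmid : ∀ j, j + 1 < k → D.Adj (r j) (r (j+1)))
    (hlast : D.Adj (r (k-1)) (f (t0 + (k : ℕ)))) : False := by
  set K := c + 2 - k with hK
  have hK2 : 2 ≤ K := by omega
  have hKlt : K ≤ c + 1 := by omega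
  apply hno
  refine ⟨fun j => if j.val < K then f (t0 + ((k + j.val : ℕ) : ZMod (c+1)))
    else r (j.val - K), ?_, ?_⟩
  · intro j1 j2 h
    dsimp only at h
    have hv1 : j1.val < c + 2 := ZMod.val_lt j1
    have hv2 : j2.val < c + 2 := ZMod.val_lt j2
    by_cases h1 : j1.val < K <;> by_cases h2 : j2.val < K
    · -- both in f part
      rw [if_pos h1, if_pos h2] at h
      have h3 := hinj h
      have h4 : ((k + j1.val : ℕ) : ZMod (c+1)) = ((k + j2.val : ℕ) : ZMod (c+1)) :=
        add_left_cancel h3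
      rw [Nat.cast_add, Nat.cast_add] at h4
      have h5 : ((j1.val : ℕ) : ZMod (c+1)) = ((j2.val : ℕ) : ZMod (c+1)) :=
        add_left_cancel h4
      exact ZMod.val_injective _ (zcast_inj (by omega) (by omega) h5)
    · rw [if_pos h1, if_neg h2] at h
      exact absurd ⟨_, h⟩ (hroff (j2.val - K) (by omega))
    · rw [if_neg h1, if_pos h2] at h
      exact absurd ⟨_, h.symm⟩ (hroff (j1.val - K) (by omega))
    · rw [if_neg h1, if_neg h2] at h
      have := hrinj _ (by omega) _ (by omega) h
      exact ZMod.val_injective _ (by omega)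
  · intro j
    dsimp only
    rcases zval_succ (n := c+1) j with ⟨hv, hs⟩ | ⟨hv, hs⟩
    · by_cases hb : j.val + 1 < K
      · have hb' : j.val < K := by omega
        rw [if_pos hb', hs, if_pos hb]
        have e : ((k + (j.val + 1) : ℕ) : ZMod (c+1))
            = ((k + j.val : ℕ) : ZMod (c+1)) + 1 := by push_cast; ring
        rw [e, ← add_assoc]
        exact harc _
      · by_cases hb2 : j.val + 1 = K
        · have hb' : j.val < K := by omega
          rw [if_pos hb', hs, if_neg (by omega)]
          have e : ((k + j.val : ℕ) : ZMod (c+1)) = 0 := by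
            have e2 : k + j.val = c + 1 := by omega
            rw [e2]; exact ZMod.natCast_self _
          rw [e, add_zero]
          have e3 : j.val + 1 - K = 0 := by omega
          rw [e3]
          exact h0
        · have hb' : ¬ j.val < K := by omega
          rw [if_neg hb', hs, if_neg (by omega)]
          have e : j.val + 1 - K = (j.val - K) + 1 := by omega
          rw [e]
          exact hmid _ (by omega)
    · rw [hv, hs, if_neg (by omega)]
      have e0 : (0 : ZMod (c+2)).val = 0 := ZMod.val_zero
      rw [e0, if_pos (by omega)]
      have e : c + 1 - K = k - 1 := by omega
      rw [e]
      have e2 : ((k + 0 : ℕ) : ZMod (c+1)) = (k : ℕ) := by norm_num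
      rw [e2]
      exact hlast

end Stmt5Aux
section Stmt5Ctx

variable {V : Type*} {c : ℕ} {D : Digraph V} {part : V → Fin c}

/-- The working context for the proof of statement 5. -/
private structure Ctx (c : ℕ) (D : Digraph V) (part : V → Fin c) : Type _ where
  hT : IsCPT D c part
  hR : IsRich D c part
  hno : ¬ HasCycle D (c+2)
  hio : ∀ f : ZMod (c+1) → V, Function.Injective f →
      (∀ k : ZMod (c+1), D.Adj (f k) (f (k + 1))) →
      ∀ y : V, y ∉ Set.range f → (∃ k, D.Adj (f k) y) ∧ (∃ k, D.Adj y (f k))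
  hc : 8 ≤ c
  P : ZMod (c+1) → Fin c
  q0 : ZMod (c+1)
  q1 : ZMod (c+1)
  hPinj : ∀ s t, P s = P t → s = t ∨ (s = q0 ∧ t = q1) ∨ (s = q1 ∧ t = q0)

variable {X : Ctx c D part}

/-- A good frame: a `(c+1)`-cycle realizing the partite layout `P`. -/
private def Ctx.Gd (X : Ctx c D part) (f : ZMod (c+1) → V) : Prop :=
  (∀ s, D.Adj (f s) (f (s+1))) ∧ (∀ s, part (f s) = X.P s) ∧ f X.q0 ≠ f X.q1

private lemma Ctx.asymm (X : Ctx c D part) {u w : V} (h : D.Adj u w) : ¬ D.Adj w u := by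
  by_cases hp : part u = part w
  · exact absurd h (X.hT.not_adj_of_same u w hp)
  · rcases X.hT.xor_adj u w hp with ⟨_, h2⟩ | ⟨_, h2⟩
    · exact h2
    · exact absurd h h2

private lemma Ctx.total (X : Ctx c D part) {u w : V} (hp : part u ≠ part w)
    (h : ¬ D.Adj w u) : D.Adj u w := by
  rcases X.hT.xor_adj u w hp with ⟨h1, _⟩ | ⟨h1, _⟩
  · exact h1
  · exact absurd h1 h

private lemma Ctx.Pne (X : Ctx c D part) {α β : ZMod (c+1)} (hne : α ≠ β)
    (h0 : α ≠ X.q0) (h1 : α ≠ X.q1) : X.P α ≠ X.P β := by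
  intro h
  rcases X.hPinj α β h with h' | ⟨h', _⟩ | ⟨h', _⟩
  · exact hne h'
  · exact h0 h'
  · exact h1 h'

private lemma Ctx.gd_inj {f : ZMod (c+1) → V} (hf : X.Gd f) : Function.Injective f := by
  intro s t h
  have hP : X.P s = X.P t := by rw [← hf.2.1 s, ← hf.2.1 t, h]
  rcases X.hPinj s t hP with h' | ⟨h1, h2⟩ | ⟨h1, h2⟩
  · exact h'
  · exact absurd (h1 ▸ h2 ▸ h) hf.2.2
  · exact absurd (h1 ▸ h2 ▸ h).symm hf.2.2

private lemma Ctx.gd_mem {f : ZMod (c+1) → V} (hf : X.Gd f) {s : ZMod (c+1)} {y : V}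
    (hs0 : s ≠ X.q0) (hs1 : s ≠ X.q1) (hy : part y = X.P s)
    (hyr : y ∈ Set.range f) : y = f s := by
  obtain ⟨t, rfl⟩ := hyr
  have hPts : X.P t = X.P s := by rw [← hf.2.1 t, hy]
  rcases X.hPinj t s hPts with h | ⟨h1, h2⟩ | ⟨h1, h2⟩
  · rw [h]
  · exact absurd h2 hs1
  · exact absurd h2 hs0

private lemma Ctx.gd_step {f : ZMod (c+1) → V} (hf : X.Gd f) {z : V} {s : ZMod (c+1)}
    (hz : z ∉ Set.range f) (hzs : part z = X.P s) (hs0 : s ≠ X.q0) (hs1 : s ≠ X.q1)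
    {t : ZMod (c+1)} (ht1 : t + 1 ≠ s) (ha : D.Adj (f t) z) : D.Adj (f (t+1)) z := by
  by_contra hcon
  have hp : part z ≠ part (f (t+1)) := by
    rw [hzs, hf.2.1]
    exact X.Pne (Ne.symm ht1) hs0 hs1
  have hzf : D.Adj z (f (t+1)) := X.total hp hcon
  exact hasCycle_of_insert X.hno f (X.gd_inj hf) hf.1 1 le_rfl (by have := X.hc; omega)
    (fun _ => z) (fun j _ => hz) (fun j1 h1 j2 h2 _ => by omega) t ha
    (fun j hj => absurd hj (by omega)) (by simpa using hzf)

private lemma Ctx.gd_out {f : ZMod (c+1) → V} (hf : X.Gd f) {z : V} {s : ZMod (c+1)}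
    (hz : z ∉ Set.range f) (hzs : part z = X.P s) (hs0 : s ≠ X.q0) (hs1 : s ≠ X.q1) :
    D.Adj z (f (s+1)) := by
  have hc := X.hc
  obtain ⟨-, k, hk⟩ := X.hio f (X.gd_inj hf) hf.1 z hz
  have hks : k ≠ s := by
    intro h; subst h
    exact X.hT.not_adj_of_same z (f k) (by rw [hzs, hf.2.1]) hk
  have key : ∀ d : ℕ, d ≤ c - 1 → D.Adj z (f (s + 1 + (d : ZMod (c+1)))) →
      D.Adj z (f (s + 1)) := by
    intro d
    induction d with
    | zero => intro _ h; simpa using h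
    | succ d ih =>
      intro hd h
      set t' := s + 1 + (d : ZMod (c+1)) with ht'
      have e1 : t' + 1 = s + 1 + ((d+1 : ℕ) : ZMod (c+1)) := by
        rw [ht']; push_cast; ring
      have e2 : t' = s + ((d+1 : ℕ) : ZMod (c+1)) := by
        rw [ht']; push_cast; ring
      have ht's : t' ≠ s := by rw [e2]; exact zshift_ne s (by omega) (by omega)
      have ht'1 : t' + 1 ≠ s := by
        rw [e1]
        intro hh
        have h4 : s + ((d+2 : ℕ) : ZMod (c+1)) = s := by
          push_cast at hh ⊢
          linear_combination hh
        exact zshift_ne s (by omega) (by omega) h4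
      have h' : D.Adj z (f (t' + 1)) := by rw [e1]; exact h
      have hne : ¬ D.Adj (f t') z := by
        intro hadj
        exact X.asymm (X.gd_step hf hz hzs hs0 hs1 ht'1 hadj) h'
      have hpz : part z ≠ part (f t') := by
        rw [hzs, hf.2.1]
        exact X.Pne (Ne.symm ht's) hs0 hs1
      exact ih (by omega) (X.total hpz hne)
  set d := (k - s - 1).val with hdd
  have hcast : ((d : ℕ) : ZMod (c+1)) = k - s - 1 := ZMod.natCast_rightInverse _
  have hk' : s + 1 + (d : ZMod (c+1)) = k := by rw [hcast]; ring
  have hdc : d ≤ c - 1 := by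
    by_contra hlarge
    have hd2 : d = c := by have := ZMod.val_lt (k - s - 1); omega
    apply hks
    have hcc : ((c+1 : ℕ) : ZMod (c+1)) = 0 := ZMod.natCast_self _
    push_cast at hcc
    rw [← hk', hd2]
    linear_combination hcc
  exact key d hdc (by rw [hk']; exact hk)

private lemma Ctx.gd_in {f : ZMod (c+1) → V} (hf : X.Gd f) {z : V} {s : ZMod (c+1)}
    (hz : z ∉ Set.range f) (hzs : part z = X.P s) (hs0 : s ≠ X.q0) (hs1 : s ≠ X.q1) :
    D.Adj (f (s-1)) z := by
  have hc := X.hc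
  obtain ⟨⟨k, hk⟩, -⟩ := X.hio f (X.gd_inj hf) hf.1 z hz
  have hks : k ≠ s := by
    intro h; subst h
    exact X.hT.not_adj_of_same (f k) z (by rw [hzs, hf.2.1]) hk
  set e := ((s - 1) - k).val with hee
  have hcast : ((e : ℕ) : ZMod (c+1)) = s - 1 - k := ZMod.natCast_rightInverse _
  have hk' : k + (e : ZMod (c+1)) = s - 1 := by rw [hcast]; ring
  have hec : e ≤ c - 1 := by
    by_contra hlarge
    have he2 : e = c := by have := ZMod.val_lt (s - 1 - k); omega
    apply hks
    have hcc : ((c+1 : ℕ) : ZMod (c+1)) = 0 := ZMod.natCast_self _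
    push_cast at hcc
    have h5 : s - 1 - k = (c : ℕ) := by rw [← hcast, he2]
    linear_combination - h5 - hcc
  have key : ∀ m : ℕ, m ≤ e → D.Adj (f (k + (m : ZMod (c+1)))) z := by
    intro m
    induction m with
    | zero => intro _; simpa using hk
    | succ m ih =>
      intro hm
      have h1 := ih (by omega)
      have ht1 : k + (m : ZMod (c+1)) + 1 ≠ s := by
        intro hh
        have h6 : ((m + 1 : ℕ) : ZMod (c+1)) = ((e + 1 : ℕ) : ZMod (c+1)) := by
          push_cast
          linear_combination hh - hk'
        have := zcast_inj (n := c+1) (by omega) (by omega) h6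
        omega
      have h2 := X.gd_step hf hz hzs hs0 hs1 ht1 h1
      have e3 : k + (m : ZMod (c+1)) + 1 = k + ((m + 1 : ℕ) : ZMod (c+1)) := by
        push_cast; ring
      rw [e3] at h2
      exact h2
  have := key e le_rfl
  rwa [hk'] at this

private lemma Ctx.gd_update {f : ZMod (c+1) → V} (hf : X.Gd f) {z : V} {s : ZMod (c+1)}
    (hz : z ∉ Set.range f) (hzs : part z = X.P s) (hs0 : s ≠ X.q0) (hs1 : s ≠ X.q1) :
    X.Gd (Function.update f s z) := by
  have hc := X.hc
  have hone : (1 : ZMod (c+1)) ≠ 0 := by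
    have := zcast_ne_zero (n := c+1) (m := 1) one_pos (by omega)
    simpa using this
  refine ⟨?_, ?_, ?_⟩
  · intro t
    by_cases h1t : t = s
    · subst h1t
      rw [Function.update_self, Function.update_of_ne (by
        intro h; exact hone (by linear_combination h))]
      exact X.gd_out hf hz hzs hs0 hs1
    · by_cases h2t : t + 1 = s
      · have e : t = s - 1 := by rw [← h2t]; ring
        rw [Function.update_of_ne h1t, h2t, Function.update_self, e]
        exact X.gd_in hf hz hzs hs0 hs1
      · rw [Function.update_of_ne h1t, Function.update_of_ne h2t]
        exact hf.1 t
  · intro t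
    by_cases h : t = s
    · subst h; rw [Function.update_self]; exact hzs
    · rw [Function.update_of_ne h]; exact hf.2.1 t
  · rw [Function.update_of_ne (Ne.symm hs0), Function.update_of_ne (Ne.symm hs1)]
    exact hf.2.2

private lemma Ctx.gd_twin {f : ZMod (c+1) → V} (hf : X.Gd f) {s : ZMod (c+1)}
    (hs0 : s ≠ X.q0) (hs1 : s ≠ X.q1) :
    ∃ z, z ∉ Set.range f ∧ part z = X.P s := by
  obtain ⟨a, b, hab, ha, hb⟩ := X.hR.2 (X.P s)
  by_cases h : a ∈ Set.range f
  · refine ⟨b, ?_, hb⟩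
    intro hbr
    exact hab ((X.gd_mem hf hs0 hs1 ha h).trans (X.gd_mem hf hs0 hs1 hb hbr).symm)
  · exact ⟨a, h, ha⟩

private lemma Ctx.gd_shield {f : ZMod (c+1) → V} (hf : X.Gd f) {s : ZMod (c+1)} {v : V}
    (hs0 : s ≠ X.q0) (hs1 : s ≠ X.q1) (hv : part v = X.P s) :
    ∃ f', X.Gd f' ∧ v ∉ Set.range f' ∧
      (∀ z, z ∉ Set.range f → part z ≠ X.P s → z ∉ Set.range f') := by
  by_cases hvr : v ∈ Set.range f
  · have hvs : v = f s := X.gd_mem hf hs0 hs1 hv hvr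
    obtain ⟨z0, hz0r, hz0p⟩ := X.gd_twin hf hs0 hs1
    refine ⟨Function.update f s z0, X.gd_update hf hz0r hz0p hs0 hs1, ?_, ?_⟩
    · rintro ⟨t, ht⟩
      by_cases h : t = s
      · subst h; rw [Function.update_self] at ht
        exact hz0r (ht ▸ hvr)
      · rw [Function.update_of_ne h] at ht
        exact h (X.gd_inj hf (ht.trans hvs))
    · intro z hzr hzp
      rintro ⟨t, ht⟩
      by_cases h : t = s
      · subst h; rw [Function.update_self] at ht
        exact hzp (ht ▸ hz0p)
      · rw [Function.update_of_ne h] at ht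
        exact hzr ⟨t, ht⟩
  · exact ⟨f, hf, hvr, fun z hz _ => hz⟩

end Stmt5Ctx

section Stmt5Main

variable {V : Type*} {c : ℕ} {D : Digraph V} {part : V → Fin c}

private lemma Ctx.main (X : Ctx c D part) : ∀ g : ℕ, 1 ≤ g → g ≤ c - 2 →
    ∀ f, X.Gd f → ∀ σ : ZMod (c+1),
    (∀ m : ℕ, m ≤ g → σ + (m : ZMod (c+1)) ≠ X.q0 ∧ σ + (m : ZMod (c+1)) ≠ X.q1) →
    ∀ u w, part u = X.P σ → part w = X.P (σ + (g : ℕ)) → D.Adj u w := by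
  intro g
  induction g using Nat.strong_induction_on with
  | _ g IH =>
  intro hg1 hg2 f hf σ havoid u w hu hw
  have hc : 8 ≤ c := X.hc
  have hσ0 : σ ≠ X.q0 := by have := (havoid 0 (by omega)).1; simpa using this
  have hσ1 : σ ≠ X.q1 := by have := (havoid 0 (by omega)).2; simpa using this
  have hm10 : σ + 1 ≠ X.q0 := by
    have := (havoid 1 (by omega)).1; simpa using this
  have hm11 : σ + 1 ≠ X.q1 := by
    have := (havoid 1 (by omega)).2; simpa using this
  rcases eq_or_lt_of_le hg1 with hg | hgg
  · -- base case g = 1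
    subst hg
    obtain ⟨f1, hf1, hu1, -⟩ := X.gd_shield hf hσ0 hσ1 hu
    have hf5 : X.Gd (Function.update f1 σ u) := X.gd_update hf1 hu1 hu hσ0 hσ1
    have hw1 : part w = X.P (σ + 1) := by simpa using hw
    have hf5σ : Function.update f1 σ u σ = u := Function.update_self σ u f1
    by_cases hwr : w ∈ Set.range (Function.update f1 σ u)
    · have hww : w = Function.update f1 σ u (σ + 1) := X.gd_mem hf5 hm10 hm11 hw1 hwr
      have h2 := hf5.1 σ
      rw [hf5σ, ← hww] at h2
      exact h2
    · have h2 := X.gd_in hf5 hwr hw1 hm10 hm11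
      have e : σ + 1 - 1 = σ := by ring
      rw [e, hf5σ] at h2
      exact h2
  · -- inductive step, g ≥ 2
    by_contra hcon
    have hgc1 : g < c + 1 := by omega
    have hτσ : σ + (g : ℕ) ≠ σ := zshift_ne σ (by omega) hgc1
    have hτ0 : σ + (g : ℕ) ≠ X.q0 := (havoid g le_rfl).1
    have hτ1 : σ + (g : ℕ) ≠ X.q1 := (havoid g le_rfl).2
    have hpwu : part w ≠ part u := by
      rw [hu, hw]
      exact X.Pne hτσ hτ0 hτ1
    have hwu : D.Adj w u := X.total hpwu hcon
    obtain ⟨f1, hf1, hu1, -⟩ := X.gd_shield hf hσ0 hσ1 hu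
    obtain ⟨F, hF, hwF, hpresF⟩ := X.gd_shield hf1 hτ0 hτ1 hw
    have huF : u ∉ Set.range F := by
      refine hpresF u hu1 ?_
      rw [hu]
      exact X.Pne (Ne.symm hτσ) hσ0 hσ1
    have hne_uw : u ≠ w := fun h => hpwu (by rw [h])
    have hone : (1 : ZMod (c+1)) ≠ 0 := by
      have := zcast_ne_zero (n := c+1) (m := 1) one_pos (by omega)
      simpa using this
    have hs1σ : σ + 1 ≠ σ := by
      intro h; exact hone (by linear_combination h)
    have hs1τ : σ + 1 ≠ σ + (g : ℕ) := by
      intro h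
      have h6 : ((1:ℕ) : ZMod (c+1)) = ((g:ℕ) : ZMod (c+1)) := by
        push_cast
        linear_combination h
      have := zcast_inj (n := c+1) (by omega) (by omega) h6
      omega
    have hwshift : part w = X.P ((σ + 1) + ((g-1 : ℕ) : ZMod (c+1))) := by
      have e2 : ((g-1 : ℕ) : ZMod (c+1)) + 1 = ((g:ℕ) : ZMod (c+1)) := by
        have h7 : ((g - 1 + 1 : ℕ) : ZMod (c+1)) = ((g : ℕ) : ZMod (c+1)) := by
          congr 1
          omega
        push_cast at h7
        linear_combination h7
      have e : (σ + 1) + ((g-1 : ℕ) : ZMod (c+1)) = σ + (g : ℕ) := by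
        linear_combination e2
      rw [e]; exact hw
    have havoid1 : ∀ m : ℕ, m ≤ g - 1 →
        (σ + 1) + (m : ZMod (c+1)) ≠ X.q0 ∧ (σ + 1) + (m : ZMod (c+1)) ≠ X.q1 := by
      intro m hm
      have e : (σ + 1) + (m : ZMod (c+1)) = σ + ((m+1 : ℕ) : ZMod (c+1)) := by
        push_cast; ring
      rw [e]
      exact havoid (m+1) (by omega)
    by_cases hsmall : g + 4 ≤ c
    · -- Construction 1 : replace two wrap vertices by the path u → z → w
      obtain ⟨z, hzF, hzP⟩ := X.gd_twin hF hm10 hm11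
      have hzu : z ≠ u := by
        intro h
        exact X.Pne hs1σ hm10 hm11 (by rw [← hzP, h, hu])
      have hzw : z ≠ w := by
        intro h
        exact X.Pne hs1τ hm10 hm11 (by rw [← hzP, h, hw])
      have hτ1σ : σ + (g:ℕ) + 1 ≠ σ := by
        intro h
        have h4 : σ + ((g+1 : ℕ) : ZMod (c+1)) = σ := by
          push_cast; push_cast at h; linear_combination h
        exact zshift_ne σ (by omega) (by omega) h4
      have hA1 : D.Adj (F (σ + (g:ℕ) + 1)) u := by
        have hF3 : X.Gd (Function.update F (σ + (g:ℕ)) w) := X.gd_update hF hwF hw hτ0 hτ1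
        have huF3 : u ∉ Set.range (Function.update F (σ + (g:ℕ)) w) :=
          notMem_range_update huF hne_uw
        have h1 : D.Adj (Function.update F (σ + (g:ℕ)) w (σ + (g:ℕ))) u := by
          rw [Function.update_self]; exact hwu
        have h2 := X.gd_step hF3 huF3 hu hσ0 hσ1 hτ1σ h1
        rwa [Function.update_of_ne (by
          intro h; exact hone (by linear_combination h))] at h2
      have hA2 : D.Adj u z := by
        refine IH 1 (by omega) (by omega) (by omega) F hF σ (fun m hm => havoid m (by omega)) u z hu ?_
        simpa using hzP
      have hA3 : D.Adj z w :=
        IH (g-1) (by omega) (by omega) (by omega) F hF (σ+1) havoid1 z w hzP hwshift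
      have hF4 : X.Gd (Function.update F σ u) := X.gd_update hF huF hu hσ0 hσ1
      have hwF4 : w ∉ Set.range (Function.update F σ u) :=
        notMem_range_update hwF (Ne.symm hne_uw)
      have chain : ∀ m : ℕ, 4 + m ≤ c + 1 - g →
          D.Adj (Function.update F σ u (σ + (g:ℕ) + ((4:ℕ) : ZMod (c+1)))) w →
          D.Adj (Function.update F σ u (σ + (g:ℕ) + ((4+m:ℕ) : ZMod (c+1)))) w := by
        intro m
        induction m with
        | zero => intro _ h; simpa using h
        | succ m ih2 =>
          intro hm h
          have h1 := ih2 (by omega) h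
          have ht1 : σ + (g:ℕ) + ((4+m:ℕ) : ZMod (c+1)) + 1 ≠ σ + (g:ℕ) := by
            intro hh
            have h4 : (σ + (g:ℕ)) + ((4+m+1 : ℕ) : ZMod (c+1)) = σ + (g:ℕ) := by
              push_cast; push_cast at hh; linear_combination hh
            exact zshift_ne _ (by omega) (by omega) h4
          have h2 := X.gd_step hF4 hwF4 hw hτ0 hτ1 ht1 h1
          have e : σ + (g:ℕ) + ((4+m:ℕ) : ZMod (c+1)) + 1
              = σ + (g:ℕ) + ((4+(m+1):ℕ) : ZMod (c+1)) := by push_cast; ring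
          rwa [e] at h2
      have hA4 : D.Adj w (F (σ + (g:ℕ) + ((4:ℕ) : ZMod (c+1)))) := by
        have hnoA : ¬ D.Adj (Function.update F σ u (σ + (g:ℕ) + ((4:ℕ):ZMod (c+1)))) w := by
          intro hA
          have h1 := chain (c+1-g-4) (by omega) hA
          have e : σ + (g:ℕ) + ((4+(c+1-g-4) : ℕ) : ZMod (c+1)) = σ := by
            have e2 : (4+(c+1-g-4)) = c+1-g := by omega
            rw [e2]
            have e3 : ((g:ℕ) : ZMod (c+1)) + ((c+1-g : ℕ) : ZMod (c+1)) = 0 := by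
              rw [← Nat.cast_add]
              have e4 : g + (c+1-g) = c+1 := by omega
              rw [e4]
              exact ZMod.natCast_self _
            linear_combination e3
          rw [e, Function.update_self] at h1
          exact hcon h1
        have hτ4 : σ + (g:ℕ) ≠ σ + (g:ℕ) + ((4:ℕ) : ZMod (c+1)) := by
          intro h
          exact zshift_ne (σ + ((g:ℕ) : ZMod (c+1))) (m := 4) (by omega) (by omega) h.symm
        have hp4 : part w ≠ part (Function.update F σ u (σ + (g:ℕ) + ((4:ℕ):ZMod (c+1)))) := by
          rw [hw, hF4.2.1]
          exact X.Pne hτ4 hτ0 hτ1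
        have h5 := X.total hp4 hnoA
        rwa [Function.update_of_ne (by
          intro h
          have h4 : σ + ((g+4 : ℕ) : ZMod (c+1)) = σ := by
            push_cast; push_cast at h; linear_combination h
          exact zshift_ne σ (by omega) (by omega) h4)] at h5
      refine hasCycle_of_insert X.hno F (X.gd_inj hF) hF.1 3 (by omega) (by omega)
        (fun j => match j with | 0 => u | 1 => z | _ => w) ?_ ?_ (σ + (g:ℕ) + 1) ?_ ?_ ?_
      · intro j hj
        interval_cases j
        exacts [huF, hzF, hwF]
      · intro j1 h1 j2 h2 h
        interval_cases j1 <;> interval_cases j2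
        exacts [rfl, absurd h (Ne.symm hzu), absurd h hne_uw,
          absurd h hzu, rfl, absurd h hzw,
          absurd h (Ne.symm hne_uw), absurd h (Ne.symm hzw), rfl]
      · exact hA1
      · intro j hj
        have hj' : j = 0 ∨ j = 1 := by omega
        rcases hj' with rfl | rfl
        · exact hA2
        · exact hA3
      · have e : σ + (g:ℕ) + 1 + ((3:ℕ) : ZMod (c+1)) = σ + (g:ℕ) + ((4:ℕ) : ZMod (c+1)) := by
          push_cast; ring
        rw [e]
        exact hA4
    · -- Construction 2 : g ≥ 4, replace the slot σ+2 by the path w → u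
      have hg4 : 4 ≤ g := by omega
      have hB1 : D.Adj (F (σ + 1)) w :=
        IH (g-1) (by omega) (by omega) (by omega) F hF (σ+1) havoid1 (F (σ+1)) w (hF.2.1 _) hwshift
      have hB3 : D.Adj u (F (σ + ((3:ℕ) : ZMod (c+1)))) :=
        IH 3 (by omega) (by omega) (by omega) F hF σ (fun m hm => havoid m (by omega)) u
          (F (σ + ((3:ℕ) : ZMod (c+1)))) hu (hF.2.1 _)
      refine hasCycle_of_insert X.hno F (X.gd_inj hF) hF.1 2 (by omega) (by omega)
        (fun j => match j with | 0 => w | _ => u) ?_ ?_ (σ + 1) ?_ ?_ ?_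
      · intro j hj
        interval_cases j
        exacts [hwF, huF]
      · intro j1 h1 j2 h2 h
        interval_cases j1 <;> interval_cases j2
        exacts [rfl, absurd h (Ne.symm hne_uw), absurd h hne_uw, rfl]
      · exact hB1
      · intro j hj
        have hj' : j = 0 := by omega
        subst hj'
        exact hwu
      · have e : σ + 1 + ((2:ℕ) : ZMod (c+1)) = σ + ((3:ℕ) : ZMod (c+1)) := by
          push_cast; ring
        rw [e]
        exact hB3

end Stmt5Main


/-- the structure claim about a `(c+1)`-cycle
`C = x_1 x_2 ⋯ x_i y_1 x_{i+1} ⋯ x_c x_1` (with `x_j ∈ V_j`, `y_1 ∈ V_1`) in a rich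
`c`-partite tournament (`c ≥ 8`) without `(c+2)`-cycles in which every vertex off any
`(c+1)`-cycle has in- and out-neighbours on that cycle. -/
theorem stmt_5 {V : Type*} (c : ℕ) (hc : 8 ≤ c) (D : Digraph V) (part : V → Fin c)
    (hT : IsCPT D c part) (hR : IsRich D c part)
    (hno : ¬ HasCycle D (c + 2))
    (hio : ∀ f : ZMod (c + 1) → V, Function.Injective f →
      (∀ k : ZMod (c + 1), D.Adj (f k) (f (k + 1))) →
      ∀ y : V, y ∉ Set.range f → (∃ k, D.Adj (f k) y) ∧ (∃ k, D.Adj y (f k)))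
    (i : ℕ) (hi1 : 1 ≤ i) (hi2 : i < c)
    (x : ℕ → V) (y1 : V)
    (hparts : ∀ j k, 1 ≤ j → j ≤ c → 1 ≤ k → k ≤ c → part (x j) = part (x k) → j = k)
    (hy1 : part y1 = part (x 1))
    (hy1x : y1 ∉ x '' Set.Icc 1 c)
    (hadj : ∀ j, 1 ≤ j → j < c → j ≠ i → D.Adj (x j) (x (j + 1)))
    (hadji : D.Adj (x i) y1) (hadji' : D.Adj y1 (x (i + 1)))
    (hadjc : D.Adj (x c) (x 1)) :
    (∀ j, 2 ≤ j → j ≤ i - 1 →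
      (∀ k, ∀ u w : V, 2 ≤ k → k ≤ j - 1 →
        part u = part (x k) → part w = part (x j) → D.Adj u w) ∧
      (∀ k, ∀ u w : V, j + 1 ≤ k → k ≤ i →
        part u = part (x j) → part w = part (x k) → D.Adj u w)) ∧
    (∀ j, i + 1 ≤ j → j ≤ c - 1 →
      (∀ k, ∀ u w : V, i + 1 ≤ k → k ≤ j - 1 →
        part u = part (x k) → part w = part (x j) → D.Adj u w) ∧
      (∀ k, ∀ u w : V, j + 1 ≤ k → k ≤ c →
        part u = part (x j) → part w = part (x k) → D.Adj u w)) := by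
  classical
  set f0 : ZMod (c+1) → V :=
    (fun s => if s.val < i then x (s.val + 1) else if s.val = i then y1 else x s.val) with hf0
  have hfeval : ∀ v : ℕ, v ≤ c →
      f0 ((v : ℕ) : ZMod (c+1)) = if v < i then x (v + 1) else if v = i then y1 else x v := by
    intro v hv
    simp only [hf0]
    rw [ZMod.val_cast_of_lt (by omega)]
  have hvinj : ∀ s t : ZMod (c+1), s.val = t.val → s = t := fun s t h =>
    ZMod.val_injective _ h
  have hq1val : ((i : ℕ) : ZMod (c+1)).val = i := ZMod.val_cast_of_lt (by omega)
  have hq0val : (0 : ZMod (c+1)).val = 0 := ZMod.val_zero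
  have hPx : ∀ s : ZMod (c+1), part (f0 s) =
      part (x (if s.val < i then s.val + 1 else if s.val = i then 1 else s.val)) := by
    intro s
    by_cases h1 : s.val < i
    · simp only [hf0]; rw [if_pos h1, if_pos h1]
    · by_cases h2 : s.val = i
      · simp only [hf0]; rw [if_neg h1, if_pos h2, if_neg h1, if_pos h2]
        exact hy1
      · simp only [hf0]; rw [if_neg h1, if_neg h2, if_neg h1, if_neg h2]
  have hidx : ∀ s : ZMod (c+1),
      1 ≤ (if s.val < i then s.val + 1 else if s.val = i then 1 else s.val) ∧
      (if s.val < i then s.val + 1 else if s.val = i then 1 else s.val) ≤ c := by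
    intro s
    have hv : s.val < c + 1 := ZMod.val_lt s
    by_cases h1 : s.val < i
    · rw [if_pos h1]; omega
    · by_cases h2 : s.val = i
      · rw [if_neg h1, if_pos h2]; omega
      · rw [if_neg h1, if_neg h2]; omega
  have hPinj : ∀ s t : ZMod (c+1), part (f0 s) = part (f0 t) →
      s = t ∨ (s = 0 ∧ t = ((i:ℕ) : ZMod (c+1))) ∨ (s = ((i:ℕ):ZMod (c+1)) ∧ t = 0) := by
    intro s t h
    rw [hPx s, hPx t] at h
    have h2 := hparts _ _ (hidx s).1 (hidx s).2 (hidx t).1 (hidx t).2 h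
    have hvs : s.val < c + 1 := ZMod.val_lt s
    have hvt : t.val < c + 1 := ZMod.val_lt t
    by_cases h1s : s.val < i <;> by_cases h1t : t.val < i
    · rw [if_pos h1s, if_pos h1t] at h2
      exact Or.inl (hvinj _ _ (by omega))
    · by_cases h2t : t.val = i
      · rw [if_pos h1s, if_neg h1t, if_pos h2t] at h2
        refine Or.inr (Or.inl ⟨?_, ?_⟩)
        · apply hvinj; rw [hq0val]; omega
        · apply hvinj; rw [hq1val]; omega
      · rw [if_pos h1s, if_neg h1t, if_neg h2t] at h2
        omega
    · by_cases h2s : s.val = i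
      · rw [if_neg h1s, if_pos h2s, if_pos h1t] at h2
        refine Or.inr (Or.inr ⟨?_, ?_⟩)
        · apply hvinj; rw [hq1val]; omega
        · apply hvinj; rw [hq0val]; omega
      · rw [if_neg h1s, if_neg h2s, if_pos h1t] at h2
        omega
    · by_cases h2s : s.val = i <;> by_cases h2t : t.val = i
      · exact Or.inl (hvinj _ _ (by omega))
      · rw [if_neg h1s, if_pos h2s, if_neg h1t, if_neg h2t] at h2; omega
      · rw [if_neg h1s, if_neg h2s, if_neg h1t, if_pos h2t] at h2; omega
      · rw [if_neg h1s, if_neg h2s, if_neg h1t, if_neg h2t] at h2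
        exact Or.inl (hvinj _ _ (by omega))
  let X : Ctx c D part :=
    { hT := hT, hR := hR, hno := hno, hio := hio, hc := hc,
      P := fun s => part (f0 s), q0 := 0, q1 := ((i:ℕ) : ZMod (c+1)), hPinj := hPinj }
  have hGd0 : X.Gd f0 := by
    refine ⟨?_, fun s => rfl, ?_⟩
    · intro s
      rcases zval_succ (n := c) s with ⟨hv, hs⟩ | ⟨hv, hs⟩
      · by_cases h1 : s.val < i
        · by_cases h2 : s.val + 1 < i
          · have e1 : f0 s = x (s.val + 1) := by simp only [hf0]; rw [if_pos h1]
            have e2 : f0 (s+1) = x (s.val + 1 + 1) := by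
              simp only [hf0]; rw [hs, if_pos h2]
            rw [e1, e2]
            exact hadj (s.val+1) (by omega) (by omega) (by omega)
          · have h2' : s.val + 1 = i := by omega
            have e1 : f0 s = x (s.val + 1) := by simp only [hf0]; rw [if_pos h1]
            have e2 : f0 (s+1) = y1 := by
              simp only [hf0]; rw [hs, if_neg (by omega), if_pos h2']
            rw [e1, e2, h2']
            exact hadji
        · by_cases h2 : s.val = i
          · have e1 : f0 s = y1 := by simp only [hf0]; rw [if_neg h1, if_pos h2]
            have e2 : f0 (s+1) = x (s.val + 1) := by
              simp only [hf0]; rw [hs, if_neg (by omega), if_neg (by omega)]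
            rw [e1, e2, h2]
            exact hadji'
          · have e1 : f0 s = x s.val := by simp only [hf0]; rw [if_neg h1, if_neg h2]
            have e2 : f0 (s+1) = x (s.val + 1) := by
              simp only [hf0]; rw [hs, if_neg (by omega), if_neg (by omega)]
            rw [e1, e2]
            exact hadj s.val (by omega) (by omega) (by omega)
      · have e1 : f0 s = x c := by
          simp only [hf0]; rw [if_neg (by omega), if_neg (by omega), hv]
        have e2 : f0 (s+1) = x 1 := by
          simp only [hf0]; rw [hs, hq0val, if_pos (by omega)]
        rw [e1, e2]
        exact hadjc
    · show f0 (0 : ZMod (c+1)) ≠ f0 ((i:ℕ) : ZMod (c+1))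
      have e1 : f0 (0 : ZMod (c+1)) = x 1 := by
        simp only [hf0]; rw [hq0val, if_pos (by omega)]
      have e2 : f0 ((i:ℕ) : ZMod (c+1)) = y1 := by
        simp only [hf0]; rw [hq1val, if_neg (by omega), if_pos rfl]
      rw [e1, e2]
      intro h
      exact hy1x ⟨1, ⟨le_refl 1, by omega⟩, h⟩
  have KEY1 : ∀ a b : ℕ, 2 ≤ a → a < b → b ≤ i →
      ∀ u w : V, part u = part (x a) → part w = part (x b) → D.Adj u w := by
    intro a b ha hab hbi u w hu hw
    refine X.main (b-a) (by omega) (by omega) f0 hGd0 ((a-1 : ℕ) : ZMod (c+1)) ?_ u w ?_ ?_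
    · intro m hm
      rw [← Nat.cast_add]
      constructor
      · intro hq
        have hq' : ((a-1+m : ℕ) : ZMod (c+1)) = ((0:ℕ) : ZMod (c+1)) := by
          rw [Nat.cast_zero]; exact hq
        have := zcast_inj (n := c+1) (by omega) (by omega) hq'
        omega
      · intro hq
        have := zcast_inj (n := c+1) (by omega) (by omega) (hq : ((a-1+m:ℕ) : ZMod (c+1)) = ((i:ℕ) : ZMod (c+1)))
        omega
    · show part u = part (f0 _)
      rw [hfeval (a-1) (by omega), if_pos (by omega)]
      have e : a - 1 + 1 = a := by omega
      rw [e]; exact hu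
    · show part w = part (f0 _)
      rw [← Nat.cast_add, hfeval (a-1+(b-a)) (by omega), if_pos (by omega)]
      have e : a - 1 + (b-a) + 1 = b := by omega
      rw [e]; exact hw
  have KEY2 : ∀ a b : ℕ, i + 1 ≤ a → a < b → b ≤ c →
      ∀ u w : V, part u = part (x a) → part w = part (x b) → D.Adj u w := by
    intro a b ha hab hbc u w hu hw
    refine X.main (b-a) (by omega) (by omega) f0 hGd0 ((a : ℕ) : ZMod (c+1)) ?_ u w ?_ ?_
    · intro m hm
      rw [← Nat.cast_add]
      constructor
      · intro hq
        have hq' : ((a+m : ℕ) : ZMod (c+1)) = ((0:ℕ) : ZMod (c+1)) := by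
          rw [Nat.cast_zero]; exact hq
        have := zcast_inj (n := c+1) (by omega) (by omega) hq'
        omega
      · intro hq
        have := zcast_inj (n := c+1) (by omega) (by omega) (hq : ((a+m:ℕ) : ZMod (c+1)) = ((i:ℕ) : ZMod (c+1)))
        omega
    · show part u = part (f0 _)
      rw [hfeval a (by omega), if_neg (by omega), if_neg (by omega)]
      exact hu
    · show part w = part (f0 _)
      rw [← Nat.cast_add, hfeval (a+(b-a)) (by omega), if_neg (by omega), if_neg (by omega)]
      have e : a + (b - a) = b := by omega
      rw [e]; exact hw
  refine ⟨?_, ?_⟩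
  · intro j hj2 hji
    refine ⟨?_, ?_⟩
    · intro k u w hk2 hkj hu hw
      exact KEY1 k j hk2 (by omega) (by omega) u w hu hw
    · intro k u w hjk hki hu hw
      exact KEY1 j k hj2 (by omega) hki u w hu hw
  · intro j hij hjc
    refine ⟨?_, ?_⟩
    · intro k u w hik hkj hu hw
      exact KEY2 k j hik (by omega) (by omega) u w hu hw
    · intro k u w hjk hkc hu hw
      exact KEY2 j k hij (by omega) hkc u w hu hw
end

section
/- Let c ≥ 5 and let D be a rich c-partite tournament. Then D contains a (c+1)-cycle or a (c+2)-cycle. -/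
open MPT

namespace Gutin
open MPT

variable {V : Type*} {D : Digraph V} {c : ℕ} {part : V → Fin c}

lemma adj_irrefl (hT : IsCPT D c part) (x : V) : ¬ D.Adj x x :=
  hT.not_adj_of_same x x rfl

lemma adj_parts_ne (hT : IsCPT D c part) {x y : V} (h : D.Adj x y) : part x ≠ part y :=
  fun he => hT.not_adj_of_same x y he h

lemma adj_asymm (hT : IsCPT D c part) {x y : V} (h : D.Adj x y) : ¬ D.Adj y x := by
  rcases hT.xor_adj x y (adj_parts_ne hT h) with ⟨_, h2⟩ | ⟨_, h2⟩
  · exact h2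
  · exact absurd h h2

lemma adj_ne (hT : IsCPT D c part) {x y : V} (h : D.Adj x y) : x ≠ y := by
  rintro rfl; exact adj_irrefl hT x h

lemma adj_total (hT : IsCPT D c part) {x y : V} (h : part x ≠ part y) :
    D.Adj x y ∨ D.Adj y x := by
  rcases hT.xor_adj x y h with ⟨h1, _⟩ | ⟨h1, _⟩
  · exact Or.inl h1
  · exact Or.inr h1

lemma adj_of_not_adj (hT : IsCPT D c part) {x y : V} (h : part x ≠ part y)
    (h2 : ¬ D.Adj x y) : D.Adj y x := (adj_total hT h).resolve_left h2

lemma val_add_one {q : ℕ} (hq : 2 ≤ q) (i : ZMod q) :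
    (i + 1).val = if i.val = q - 1 then 0 else i.val + 1 := by
  haveI : NeZero q := ⟨by omega⟩
  have h1 : (1 : ZMod q).val = 1 := by
    rw [ZMod.val_one_eq_one_mod, Nat.mod_eq_of_lt (by omega)]
  have hlt : i.val < q := ZMod.val_lt i
  rw [ZMod.val_add, h1]
  split
  · next h =>
    rw [h]
    have h2 : q - 1 + 1 = q := by omega
    rw [h2, Nat.mod_self]
  · next h => exact Nat.mod_eq_of_lt (by omega)

lemma hasCycle_concat (q : ℕ) (hq : 2 ≤ q) (f : ℕ → V)
    (hinj : ∀ x < q, ∀ y < q, f x = f y → x = y)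
    (hadj : ∀ x, x + 1 < q → D.Adj (f x) (f (x+1)))
    (hwrap : D.Adj (f (q-1)) (f 0)) : HasCycle D q := by
  haveI : NeZero q := ⟨by omega⟩
  refine ⟨fun i => f i.val, ?_, ?_⟩
  · intro x y hxy
    exact ZMod.val_injective q (hinj x.val (ZMod.val_lt x) y.val (ZMod.val_lt y) hxy)
  · intro i
    show D.Adj (f i.val) (f ((i+1).val))
    rw [val_add_one hq i]
    split
    · next h => rw [h]; exact hwrap
    · next h =>
      have : i.val + 1 < q := by have := ZMod.val_lt i; omega
      exact hadj i.val this

lemma off_inj {n : ℕ} [NeZero n] (j : ZMod n) {x y : ℕ} (hx : x < n) (hy : y < n)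
    (h : j + (x:ZMod n) = j + (y:ZMod n)) : x = y := by
  have h' := add_left_cancel h
  have h1 : ((x:ZMod n)).val = ((y:ZMod n)).val := by rw [h']
  rwa [ZMod.val_cast_of_lt hx, ZMod.val_cast_of_lt hy] at h1

lemma seg_adj {n : ℕ} {g : ZMod n → V} (hadj : ∀ i, D.Adj (g i) (g (i+1)))
    (j : ZMod n) (t : ℕ) : D.Adj (g (j + (t:ZMod n))) (g (j + ((t+1:ℕ):ZMod n))) := by
  have : j + ((t+1:ℕ):ZMod n) = (j + (t:ZMod n)) + 1 := by push_cast; ring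
  rw [this]; exact hadj _

/-- segment `g j, g (j+1), …, g (j+d)` followed by two external vertices `a, b`. -/
lemma hasCycle_seg2 {n : ℕ} [NeZero n] {g : ZMod n → V} (hg : Function.Injective g)
    (hadj : ∀ i, D.Adj (g i) (g (i+1))) (j : ZMod n) (d : ℕ) (hd : d < n)
    {a b : V} (ha : a ∉ Set.range g) (hb : b ∉ Set.range g) (hab : a ≠ b)
    (h1 : D.Adj (g (j + (d:ZMod n))) a) (h2 : D.Adj a b) (h3 : D.Adj b (g j)) :
    HasCycle D (d+3) := by
  apply hasCycle_concat (d+3) (by omega)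
    (fun t => if t ≤ d then g (j + (t:ZMod n)) else if t = d+1 then a else b)
  · intro x hx y hy hxy
    by_cases h1x : x ≤ d <;> by_cases h1y : y ≤ d
    · rw [if_pos h1x, if_pos h1y] at hxy
      exact off_inj j (by omega) (by omega) (hg hxy)
    · rw [if_pos h1x, if_neg h1y] at hxy
      by_cases h2 : y = d+1
      · rw [if_pos h2] at hxy; exact absurd ⟨_, hxy⟩ ha
      · rw [if_neg h2] at hxy; exact absurd ⟨_, hxy⟩ hb
    · rw [if_neg h1x, if_pos h1y] at hxy
      by_cases h2 : x = d+1
      · rw [if_pos h2] at hxy; exact absurd ⟨_, hxy.symm⟩ ha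
      · rw [if_neg h2] at hxy; exact absurd ⟨_, hxy.symm⟩ hb
    · rw [if_neg h1x, if_neg h1y] at hxy
      by_cases h2x : x = d+1 <;> by_cases h2y : y = d+1
      · omega
      · rw [if_pos h2x, if_neg h2y] at hxy; exact absurd hxy hab
      · rw [if_neg h2x, if_pos h2y] at hxy; exact absurd hxy.symm hab
      · omega
  · intro x hx
    by_cases hxd : x + 1 ≤ d
    · simp only [if_pos (by omega : x ≤ d), if_pos hxd]
      exact seg_adj hadj j x
    · by_cases hxe : x ≤ d
      · have : x = d := by omega
        subst this
        simp only [if_pos le_rfl, if_neg (by omega : ¬ x + 1 ≤ x), if_pos rfl]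
        exact h1
      · have : x = d + 1 := by omega
        subst this
        simp only [if_neg hxe, if_neg (by omega : ¬ d + 1 + 1 ≤ d), if_pos rfl,
          if_neg (by omega : ¬ d + 1 + 1 = d + 1)]
        exact h2
  · simp only [if_neg (by omega : ¬ d + 3 - 1 ≤ d), if_neg (by omega : ¬ d + 3 - 1 = d + 1),
      if_pos (by omega : (0:ℕ) ≤ d)]
    simpa using h3

/-- segment followed by one external vertex. -/
lemma hasCycle_seg1 {n : ℕ} [NeZero n] {g : ZMod n → V} (hg : Function.Injective g)
    (hadj : ∀ i, D.Adj (g i) (g (i+1))) (j : ZMod n) (d : ℕ) (hd : d < n)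
    {a : V} (ha : a ∉ Set.range g)
    (h1 : D.Adj (g (j + (d:ZMod n))) a) (h3 : D.Adj a (g j)) :
    HasCycle D (d+2) := by
  apply hasCycle_concat (d+2) (by omega)
    (fun t => if t ≤ d then g (j + (t:ZMod n)) else a)
  · intro x hx y hy hxy
    by_cases h1x : x ≤ d <;> by_cases h1y : y ≤ d
    · rw [if_pos h1x, if_pos h1y] at hxy
      exact off_inj j (by omega) (by omega) (hg hxy)
    · rw [if_pos h1x, if_neg h1y] at hxy; exact absurd ⟨_, hxy⟩ ha
    · rw [if_neg h1x, if_pos h1y] at hxy; exact absurd ⟨_, hxy.symm⟩ ha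
    · omega
  · intro x hx
    by_cases hxd : x + 1 ≤ d
    · simp only [if_pos (by omega : x ≤ d), if_pos hxd]
      exact seg_adj hadj j x
    · have : x = d := by omega
      subst this
      simp only [if_pos le_rfl, if_neg (by omega : ¬ x + 1 ≤ x)]
      exact h1
  · simp only [if_neg (by omega : ¬ d + 2 - 1 ≤ d), if_pos (by omega : (0:ℕ) ≤ d)]
    simpa using h3

/-- segment with a wrapping chord. -/
lemma hasCycle_seg0 {n : ℕ} [NeZero n] {g : ZMod n → V} (hg : Function.Injective g)
    (hadj : ∀ i, D.Adj (g i) (g (i+1))) (j : ZMod n) (d : ℕ) (hd : d < n) (hd1 : 1 ≤ d)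
    (h1 : D.Adj (g (j + (d:ZMod n))) (g j)) :
    HasCycle D (d+1) := by
  apply hasCycle_concat (d+1) (by omega) (fun t => g (j + (t:ZMod n)))
  · intro x hx y hy hxy
    exact off_inj j (by omega) (by omega) (hg hxy)
  · intro x hx
    exact seg_adj hadj j x
  · simpa using h1

end Gutin
namespace Gutin
open MPT

variable {V : Type*} {D : Digraph V} {c : ℕ} {part : V → Fin c}


lemma exists_min {P : ℕ → Prop} (h : ∃ n, P n) : ∃ n, P n ∧ ∀ m, P m → n ≤ m :=
  ⟨sInf (setOf P), Nat.sInf_mem h, fun _ hm => Nat.sInf_le hm⟩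

lemma exists_cycle (hT : IsCPT D c part) (hS : IsStrong D) {u v : V} (huv : u ≠ v) :
    ∃ q, 2 ≤ q ∧ HasCycle D q := by
  obtain ⟨n1, f1, hf1⟩ := hS u v huv
  obtain ⟨n2, f2, hf2⟩ := hS v u huv.symm
  have hn1 : 1 ≤ n1 := by
    rcases Nat.eq_zero_or_pos n1 with h | h
    · exact absurd (hf1.1.symm.trans (h ▸ hf1.2.1)) huv
    · exact h
  have hn2 : 1 ≤ n2 := by
    rcases Nat.eq_zero_or_pos n2 with h | h
    · exact absurd (hf2.1.symm.trans (h ▸ hf2.2.1)).symm huv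
    · exact h
  have hMne : (n1 + n2) ∈ {k | 1 ≤ k ∧ ∃ f : ℕ → V, f 0 = f k ∧ ∀ i < k, D.Adj (f i) (f (i+1))} := by
    refine ⟨by omega, fun t => if t < n1 then f1 t else f2 (t - n1), ?_, ?_⟩
    · show (if 0 < n1 then f1 0 else f2 (0 - n1)) = if n1 + n2 < n1 then f1 (n1+n2) else f2 (n1 + n2 - n1)
      rw [if_pos (by omega), if_neg (by omega)]
      rw [hf1.1]
      have h3 : n1 + n2 - n1 = n2 := by omega
      rw [h3, hf2.2.1]
    · intro i hi
      show D.Adj (if i < n1 then f1 i else f2 (i - n1)) (if i+1 < n1 then f1 (i+1) else f2 (i+1 - n1))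
      by_cases h1 : i + 1 < n1
      · rw [if_pos (by omega : i < n1), if_pos h1]
        exact hf1.2.2 i (by omega)
      · by_cases h2 : i < n1
        · have he : i + 1 = n1 := by omega
          rw [if_pos h2, if_neg (by omega : ¬ i + 1 < n1)]
          have h3 : i + 1 - n1 = 0 := by omega
          rw [h3, hf2.1, ← hf1.2.1, ← he]
          exact hf1.2.2 i (by omega)
        · rw [if_neg h2, if_neg (by omega : ¬ i + 1 < n1)]
          have h3 : i + 1 - n1 = (i - n1) + 1 := by omega
          rw [h3]
          exact hf2.2.2 (i - n1) (by omega)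
  obtain ⟨q, ⟨hq1, f, hf0, hfadj⟩, hmin'⟩ := exists_min ⟨_, hMne⟩
  have hmin : ∀ k, 1 ≤ k → (∃ f : ℕ → V, f 0 = f k ∧ ∀ i < k, D.Adj (f i) (f (i+1))) → q ≤ k :=
    fun k h1 h2 => hmin' k ⟨h1, h2⟩
  have hinj : ∀ x < q, ∀ y < q, f x = f y → x = y := by
    have key : ∀ x y, x < y → y < q → f x ≠ f y := by
      intro x y hxy hyq heq
      have hmem : q ≤ y - x := by
        refine hmin _ (by omega) ⟨fun t => f (x + t), ?_, ?_⟩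
        · show f (x + 0) = f (x + (y-x))
          have h3 : x + (y - x) = y := by omega
          have h4 : x + 0 = x := by omega
          rw [h3, h4, heq]
        · intro i hi
          show D.Adj (f (x+i)) (f (x + (i+1)))
          have h3 : x + (i+1) = (x+i) + 1 := by omega
          rw [h3]
          exact hfadj (x+i) (by omega)
      omega
    intro x hx y hy hxy
    rcases Nat.lt_trichotomy x y with h | h | h
    · exact absurd hxy (key x y h hy)
    · exact h
    · exact absurd hxy.symm (key y x h hx)
  have hq2 : 2 ≤ q := by
    rcases Nat.lt_or_ge q 2 with h | h
    · exfalso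
      have hq1' : q = 1 := by omega
      have := hfadj 0 (by omega)
      rw [show (0+1:ℕ) = q by omega, ← hf0] at this
      exact adj_irrefl hT (f 0) this
    · exact h
  refine ⟨q, hq2, hasCycle_concat q hq2 f hinj (fun x hx => hfadj x (by omega)) ?_⟩
  have := hfadj (q-1) (by omega)
  rw [show q - 1 + 1 = q by omega, ← hf0] at this
  exact this

def NoOut (D : Digraph V) {n : ℕ} (g : ZMod n → V) (s : V) : Prop :=
  s ∉ Set.range g ∧ ∀ i, ¬ D.Adj s (g i)

def NoIn (D : Digraph V) {n : ℕ} (g : ZMod n → V) (s : V) : Prop :=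
  s ∉ Set.range g ∧ ∀ i, ¬ D.Adj (g i) s

lemma s_min_out {n : ℕ} (hS : IsStrong D) {g : ZMod n → V} {s₀ : V}
    (h₀ : NoOut D g s₀) :
    ∃ s x, NoOut D g s ∧ D.Adj s x ∧ x ∉ Set.range g ∧ ∃ j, D.Adj x (g j) := by
  classical
  have hKne : ∃ k, ∃ s, NoOut D g s ∧ ∃ f : ℕ → V, f 0 = s ∧
      (∀ i < k, D.Adj (f i) (f (i+1))) ∧ f k ∈ Set.range g := by
    have hne : s₀ ≠ g 0 := fun h => h₀.1 ⟨0, h.symm⟩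
    obtain ⟨n1, f1, hf1⟩ := hS s₀ (g 0) hne
    exact ⟨n1, s₀, h₀, f1, hf1.1, hf1.2.2, ⟨0, hf1.2.1.symm⟩⟩
  obtain ⟨k, ⟨s, hs, f, hf0, hfadj, hfk⟩, hmin'⟩ := exists_min hKne
  have hmin : ∀ m s' (f' : ℕ → V), NoOut D g s' → f' 0 = s' →
      (∀ i < m, D.Adj (f' i) (f' (i+1))) → f' m ∈ Set.range g → k ≤ m :=
    fun m s' f' h1 h2 h3 h4 => hmin' m ⟨s', h1, f', h2, h3, h4⟩
  have hk0 : k ≠ 0 := by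
    intro h
    rw [h] at hfk
    exact hs.1 (hf0 ▸ hfk)
  have hk1 : k ≠ 1 := by
    intro h
    rw [h] at hfk
    obtain ⟨j, hj⟩ := hfk
    have := hfadj 0 (by omega)
    rw [hf0, show (0+1:ℕ) = 1 from rfl, ← hj] at this
    exact hs.2 j this
  refine ⟨s, f 1, hs, hf0 ▸ hfadj 0 (by omega), ?_, ?_⟩
  · intro hmem
    have := hmin 1 s f hs hf0 (fun i hi => hfadj i (by omega)) hmem
    omega
  · by_contra h
    push_neg at h
    have hx : NoOut D g (f 1) := by
      refine ⟨?_, h⟩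
      intro hmem
      have := hmin 1 s f hs hf0 (fun i hi => hfadj i (by omega)) hmem
      omega
    have : k ≤ k - 1 := by
      refine hmin (k-1) (f 1) (fun t => f (t+1)) hx rfl ?_ ?_
      · intro i hi
        exact hfadj (i+1) (by omega)
      · show f (k - 1 + 1) ∈ Set.range g
        rw [show k - 1 + 1 = k by omega]
        exact hfk
    omega

lemma s_min_in {n : ℕ} (hS : IsStrong D) {g : ZMod n → V} {s₀ : V}
    (h₀ : NoIn D g s₀) :
    ∃ s x, NoIn D g s ∧ D.Adj x s ∧ x ∉ Set.range g ∧ ∃ j, D.Adj (g j) x := by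
  classical
  have hKne : ∃ k, ∃ s, NoIn D g s ∧ ∃ f : ℕ → V, f k = s ∧
      (∀ i < k, D.Adj (f i) (f (i+1))) ∧ f 0 ∈ Set.range g := by
    have hne : (g 0) ≠ s₀ := fun h => h₀.1 ⟨0, h⟩
    obtain ⟨n1, f1, hf1⟩ := hS (g 0) s₀ hne
    exact ⟨n1, s₀, h₀, f1, hf1.2.1, hf1.2.2, ⟨0, hf1.1.symm⟩⟩
  obtain ⟨k, ⟨s, hs, f, hfk, hfadj, hf0⟩, hmin'⟩ := exists_min hKne
  have hmin : ∀ m s' (f' : ℕ → V), NoIn D g s' → f' m = s' →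
      (∀ i < m, D.Adj (f' i) (f' (i+1))) → f' 0 ∈ Set.range g → k ≤ m :=
    fun m s' f' h1 h2 h3 h4 => hmin' m ⟨s', h1, f', h2, h3, h4⟩
  have hk0 : k ≠ 0 := by
    intro h
    rw [h] at hfk
    exact hs.1 (hfk ▸ hf0)
  have hk1 : k ≠ 1 := by
    intro h
    obtain ⟨j, hj⟩ := hf0
    have h2 := hfadj 0 (by omega)
    have h3 : f (0+1) = s := by rw [show (0+1:ℕ) = 1 from rfl, ← h, hfk]
    rw [← hj, h3] at h2
    exact hs.2 j h2
  have hadj1 : D.Adj (f (k-1)) s := by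
    have := hfadj (k-1) (by omega)
    rwa [show k - 1 + 1 = k by omega, hfk] at this
  refine ⟨s, f (k-1), hs, hadj1, ?_, ?_⟩
  · intro hmem
    have : k ≤ 1 := by
      refine hmin 1 s (fun t => if t = 0 then f (k-1) else s) hs (by simp) ?_ (by simpa using hmem)
      intro i hi
      have h3 : i = 0 := by omega
      subst h3
      simpa using hadj1
    omega
  · by_contra h
    push_neg at h
    have hx : NoIn D g (f (k-1)) := by
      refine ⟨?_, h⟩
      intro hmem
      have : k ≤ 1 := by
        refine hmin 1 s (fun t => if t = 0 then f (k-1) else s) hs (by simp) ?_ (by simpa using hmem)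
        intro i hi
        have h3 : i = 0 := by omega
        subst h3
        simpa using hadj1
      omega
    have : k ≤ k - 1 :=
      hmin (k-1) (f (k-1)) f hx rfl (fun i hi => hfadj i (by omega)) hf0
    omega

/-- from a vertex with no out-arc into the cycle, get a cycle of length `d1+3` or `d1+4`. -/
lemma noout_flex {n : ℕ} [NeZero n] (hT : IsCPT D c part) (hS : IsStrong D)
    {g : ZMod n → V} (hg : Function.Injective g) (hadj : ∀ i, D.Adj (g i) (g (i+1)))
    {s₀ : V} (h₀ : NoOut D g s₀) (d1 : ℕ) (hd1 : d1 + 1 < n) :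
    HasCycle D (d1+3) ∨ HasCycle D (d1+4) := by
  obtain ⟨s, x, hs, hsx, hxr, j, hxj⟩ := s_min_out hS h₀
  have hsx_ne : s ≠ x := adj_ne hT hsx
  have hcons : D.Adj (g (j + (d1:ZMod n))) (g (j + ((d1+1:ℕ):ZMod n))) := seg_adj hadj j d1
  have hpp : part (g (j + (d1:ZMod n))) ≠ part s ∨ part (g (j + ((d1+1:ℕ):ZMod n))) ≠ part s := by
    by_contra hcc
    push_neg at hcc
    exact adj_parts_ne hT hcons (hcc.1.trans hcc.2.symm)
  rcases hpp with hp | hp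
  · left
    refine hasCycle_seg2 hg hadj j d1 (by omega) hs.1 hxr hsx_ne ?_ hsx hxj
    exact adj_of_not_adj hT (fun h => hp h.symm) (hs.2 _)
  · right
    have h4 : d1 + 4 = (d1+1) + 3 := by omega
    rw [h4]
    refine hasCycle_seg2 hg hadj j (d1+1) (by omega) hs.1 hxr hsx_ne ?_ hsx hxj
    exact adj_of_not_adj hT (fun h => hp h.symm) (hs.2 _)

lemma noin_flex {n : ℕ} [NeZero n] (hT : IsCPT D c part) (hS : IsStrong D)
    {g : ZMod n → V} (hg : Function.Injective g) (hadj : ∀ i, D.Adj (g i) (g (i+1)))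
    {s₀ : V} (h₀ : NoIn D g s₀) (d1 : ℕ) (hd1 : d1 + 1 < n) :
    HasCycle D (d1+3) ∨ HasCycle D (d1+4) := by
  obtain ⟨s, x, hs, hxs, hxr, j, hjx⟩ := s_min_in hS h₀
  have hsx_ne : x ≠ s := adj_ne hT hxs
  have e1 : ∀ d : ℕ, (j - (d:ZMod n)) + (d:ZMod n) = j := by intro d; ring
  have hcons : D.Adj (g (j - ((d1+1:ℕ):ZMod n))) (g (j - (d1:ZMod n))) := by
    have h2 : j - (d1:ZMod n) = (j - ((d1+1:ℕ):ZMod n)) + 1 := by push_cast; ring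
    rw [h2]; exact hadj _
  have hpp : part (g (j - (d1:ZMod n))) ≠ part s ∨ part (g (j - ((d1+1:ℕ):ZMod n))) ≠ part s := by
    by_contra hcc
    push_neg at hcc
    exact adj_parts_ne hT hcons (hcc.2.trans hcc.1.symm)
  rcases hpp with hp | hp
  · left
    refine hasCycle_seg2 hg hadj (j - (d1:ZMod n)) d1 (by omega) hxr hs.1 hsx_ne ?_ hxs ?_
    · rw [e1]; exact hjx
    · exact adj_of_not_adj hT hp (hs.2 _)
  · right
    have h4 : d1 + 4 = (d1+1) + 3 := by omega
    rw [h4]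
    refine hasCycle_seg2 hg hadj (j - ((d1+1:ℕ):ZMod n)) (d1+1) (by omega) hxr hs.1 hsx_ne ?_ hxs ?_
    · rw [e1]; exact hjx
    · exact adj_of_not_adj hT hp (hs.2 _)

end Gutin
namespace Gutin
open MPT

section Growth

variable {n cc : ℕ} [NeZero n] {O : Set (ZMod n)} {h₀ : ZMod n}

/-- coverage of an interval of length `L` starting at `a` by `O ∪ {h₀}` -/
def Cov (O : Set (ZMod n)) (h₀ : ZMod n) (a : ZMod n) (L : ℕ) : Prop :=
  ∀ k < L, a + (k:ZMod n) ∈ O ∪ {h₀}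

lemma val_cast_self {n : ℕ} [NeZero n] (x : ZMod n) : ((x.val : ℕ) : ZMod n) = x := by
  simpa using ZMod.natCast_zmod_cast x

lemma off_eq_iff {n : ℕ} [NeZero n] (a t : ZMod n) {k : ℕ} (hk : k < n) :
    a + (k:ZMod n) = t ↔ (t - a).val = k := by
  constructor
  · intro h
    have h2 : (t - a) = (k:ZMod n) := by rw [← h]; ring
    rw [h2, ZMod.val_cast_of_lt hk]
  · intro h
    rw [← h, val_cast_self]; ring

lemma mem_O_of_cov {a : ZMod n} {L : ℕ} (hcov : Cov O h₀ a L) {k : ℕ} (hk : k < L)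
    (hne : a + (k:ZMod n) ≠ h₀) : a + (k:ZMod n) ∈ O := by
  rcases hcov k hk with h | h
  · exact h
  · exact absurd h hne

lemma growA (hc : 5 ≤ cc) (hn : cc + 3 ≤ n)
    (hcl : ∀ j ∈ O, ∀ d : ℕ, cc - 1 ≤ d → d ≤ n - 3 → j + (d:ZMod n) ∈ O ∪ {h₀})
    (a : ZMod n) (L : ℕ) (hL1 : 1 ≤ L) (hLc : L ≤ cc)
    (hcov : Cov O h₀ a L)
    (he1 : a ∈ O) (he2 : a + ((L-1 : ℕ):ZMod n) ∈ O) :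
    Cov O h₀ (a + ((cc-1:ℕ):ZMod n)) (L + (n - cc) - 2) := by
  intro t ht
  obtain ⟨m, hmL, hmO, hmt, hmd⟩ : ∃ m, m < L ∧ a + (m:ZMod n) ∈ O ∧ m ≤ t ∧ t - m ≤ n - cc - 2 := by
    rcases Nat.lt_or_ge t L with h | h
    · by_cases he : a + (t:ZMod n) ∈ O
      · exact ⟨t, h, he, le_refl t, by omega⟩
      · have ht0 : 1 ≤ t := by
          rcases Nat.eq_zero_or_pos t with h0 | h0
          · exfalso; apply he; rw [h0]; simpa using he1
          · exact h0
        refine ⟨t-1, by omega, ?_, by omega, by omega⟩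
        have htne : a + ((t-1:ℕ):ZMod n) ≠ a + (t:ZMod n) := by
          intro hcon
          have := off_inj a (by omega : t-1 < n) (by omega : t < n) hcon
          omega
        rcases hcov (t-1) (by omega) with h1 | h1
        · exact h1
        · exfalso
          rcases hcov t h with h2 | h2
          · exact he h2
          · exact htne (h1.trans h2.symm)
    · exact ⟨L-1, by omega, he2, by omega, by omega⟩
  have hmem := hcl _ hmO (cc - 1 + (t - m)) (by omega) (by omega)
  have heq : (a + (m:ZMod n)) + ((cc - 1 + (t - m) : ℕ):ZMod n)
      = (a + ((cc-1:ℕ):ZMod n)) + (t:ZMod n) := by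
    have hnat : m + (cc - 1 + (t - m)) = (cc - 1) + t := by omega
    calc (a + (m:ZMod n)) + ((cc - 1 + (t - m) : ℕ):ZMod n)
        = a + ((m + (cc - 1 + (t - m)) : ℕ):ZMod n) := by push_cast; ring
      _ = a + ((((cc-1) + t) : ℕ):ZMod n) := by rw [hnat]
      _ = (a + ((cc-1:ℕ):ZMod n)) + (t:ZMod n) := by push_cast; ring
  rwa [heq] at hmem

lemma cov_mono {a : ZMod n} {L L' : ℕ} (h : L' ≤ L) (hcov : Cov O h₀ a L) : Cov O h₀ a L' :=
  fun k hk => hcov k (by omega)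

/-- interval with all elements in `O` grows by at least one. -/
lemma growA' (hc : 5 ≤ cc) (hn : cc + 3 ≤ n)
    (hcl : ∀ j ∈ O, ∀ d : ℕ, cc - 1 ≤ d → d ≤ n - 3 → j + (d:ZMod n) ∈ O ∪ {h₀})
    (a : ZMod n) (L : ℕ) (hL1 : 1 ≤ L) (hLc : L ≤ cc)
    (hcov : ∀ k < L, a + (k:ZMod n) ∈ O) :
    Cov O h₀ (a + ((cc-1:ℕ):ZMod n)) (L + 1) := by
  have h1 := growA hc hn hcl a L hL1 hLc (fun k hk => Or.inl (hcov k hk))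
    (by simpa using hcov 0 (by omega)) (hcov (L-1) (by omega))
  exact cov_mono (by omega) h1

/-- offset repackaging : `(a + x) + k = a + (x + k)` -/
lemma off_off {n : ℕ} (a : ZMod n) (x k : ℕ) :
    (a + (x:ZMod n)) + (k:ZMod n) = a + ((x+k:ℕ):ZMod n) := by push_cast; ring

lemma growC (hc : 5 ≤ cc) (hn : cc + 3 ≤ n)
    (hcl : ∀ j ∈ O, ∀ d : ℕ, cc - 1 ≤ d → d ≤ n - 3 → j + (d:ZMod n) ∈ O ∪ {h₀})
    (a : ZMod n) (L : ℕ) (hL1 : 2 ≤ L) (hLc : L < cc)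
    (hcov : Cov O h₀ a L)
    (hC : a + ((L-1 : ℕ):ZMod n) ∉ O) :
    ∃ b, Cov O h₀ b (L+1) := by
  have hCe : a + ((L-1:ℕ):ZMod n) = h₀ := by
    rcases hcov (L-1) (by omega) with h | h
    · exact absurd h hC
    · exact h
  have hinner : ∀ k < L - 1, a + (k:ZMod n) ∈ O := by
    intro k hk
    refine mem_O_of_cov hcov (by omega) (fun hcon => ?_)
    have := off_inj a (by omega : k < n) (by omega : L-1 < n) (hcon.trans hCe.symm)
    omega
  have h1 := growA hc hn hcl a (L-1) (by omega) (by omega)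
    (fun k hk => Or.inl (hinner k hk)) (by simpa using hinner 0 (by omega))
    (hinner (L-1-1) (by omega))
  -- h1 : Cov (a + (cc-1)) (L - 1 + (n - cc) - 2)
  rcases Nat.lt_or_ge (cc + 3) n with hs | hs
  · exact ⟨_, cov_mono (by omega) h1⟩
  · -- n = cc + 3
    have hn3 : n = cc + 3 := by omega
    have h2 : Cov O h₀ (a + ((cc-1:ℕ):ZMod n)) L := cov_mono (by omega) h1
    -- h₀ sits at offset L + 3 from the new base, outside [0, L)
    have hpos : h₀ = (a + ((cc-1:ℕ):ZMod n)) + ((L + (n - cc) : ℕ):ZMod n) := by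
      rw [off_off]
      have hnat : cc - 1 + (L + (n - cc)) = (L-1) + n := by omega
      rw [hnat, ← hCe]
      push_cast
      rw [ZMod.natCast_self]
      ring
    have hall : ∀ k < L, (a + ((cc-1:ℕ):ZMod n)) + (k:ZMod n) ∈ O := by
      intro k hk
      refine mem_O_of_cov h2 hk (fun hcon => ?_)
      have h3 : (a + ((cc-1:ℕ):ZMod n)) + (k:ZMod n)
          = (a + ((cc-1:ℕ):ZMod n)) + ((L + (n - cc) : ℕ):ZMod n) := hcon.trans hpos
      have := off_inj _ (by omega : k < n) (by omega : L + (n-cc) < n) h3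
      omega
    exact ⟨_, growA' hc hn hcl _ L (by omega) (by omega) hall⟩

lemma growB (hc : 5 ≤ cc) (hn : cc + 3 ≤ n)
    (hcl : ∀ j ∈ O, ∀ d : ℕ, cc - 1 ≤ d → d ≤ n - 3 → j + (d:ZMod n) ∈ O ∪ {h₀})
    (a : ZMod n) (L : ℕ) (hL1 : 2 ≤ L) (hLc : L < cc)
    (hcov : Cov O h₀ a L)
    (hB : a ∉ O) :
    ∃ b, Cov O h₀ b (L+1) := by
  have hBe : a = h₀ := by
    have := hcov 0 (by omega)
    simp only [Nat.cast_zero, add_zero] at this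
    rcases this with h | h
    · exact absurd h hB
    · exact h
  have hOh : h₀ ∉ O := hBe ▸ hB
  have hinner : ∀ k < L - 1, (a + (1:ℕ)) + (k:ZMod n) ∈ O := by
    intro k hk
    rw [off_off]
    refine mem_O_of_cov hcov (by omega) (fun hcon => ?_)
    rw [← hBe] at hcon
    have h3 : a + ((1+k:ℕ):ZMod n) = a + ((0:ℕ):ZMod n) := by simpa using hcon
    have := off_inj a (by omega : 1+k < n) (by omega : 0 < n) h3
    omega
  have h1 := growA hc hn hcl (a + (1:ℕ)) (L-1) (by omega) (by omega)
    (fun k hk => Or.inl (hinner k hk)) (by simpa using hinner 0 (by omega))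
    (hinner (L-1-1) (by omega))
  rcases Nat.lt_or_ge (cc + 3) n with hs | hs
  · exact ⟨_, cov_mono (by omega) h1⟩
  · have hn3 : n = cc + 3 := by omega
    set b : ZMod n := (a + (1:ℕ)) + ((cc-1:ℕ):ZMod n) with hbdef
    have h2 : Cov O h₀ b L := cov_mono (by omega) h1
    -- h₀ = a = b + 3
    have hpos : h₀ = b + ((3:ℕ):ZMod n) := by
      rw [hbdef, off_off, off_off]
      have hnat : 1 + (cc - 1 + 3) = n := by omega
      rw [hnat, ← hBe]
      rw [ZMod.natCast_self]
      ring
    have hposk : ∀ k < n, (b + (k:ZMod n) = h₀ ↔ k = 3) := by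
      intro k hk
      constructor
      · intro h
        exact off_inj b hk (by omega) (h.trans hpos)
      · intro h; rw [h, ← hpos]
    rcases Nat.lt_or_ge L 4 with hL4 | hL4
    · -- L ≤ 3 : all in O
      have hall : ∀ k < L, b + (k:ZMod n) ∈ O := by
        intro k hk
        refine mem_O_of_cov h2 hk (fun hcon => ?_)
        have := (hposk k (by omega)).1 hcon
        omega
      exact ⟨_, growA' hc hn hcl b L (by omega) (by omega) hall⟩
    · have hb0 : b ∈ O := by
        have := mem_O_of_cov h2 (show (0:ℕ) < L by omega) (fun hcon => by
          have := (hposk 0 (by omega)).1 hcon; omega)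
        simpa using this
      rcases Nat.eq_or_lt_of_le hL4 with hL4e | hL5
      · -- L = 4 : h₀ = b + 3 = right endpoint, use the C-case
        refine growC hc hn hcl b L (by omega) (by omega) h2 ?_
        intro hcon
        apply hOh
        have h3 : b + ((L-1:ℕ):ZMod n) = h₀ := (hposk (L-1) (by omega)).2 (by omega)
        rwa [h3] at hcon
      · -- L ≥ 5 : h₀ interior of (b, L)
        have hbL : b + ((L-1:ℕ):ZMod n) ∈ O :=
          mem_O_of_cov h2 (show L-1 < L by omega) (fun hcon => by
            have := (hposk (L-1) (by omega)).1 hcon; omega)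
        exact ⟨_, cov_mono (by omega) (growA hc hn hcl b L (by omega) (by omega) h2 hb0 hbL)⟩

lemma grow_step (hc : 5 ≤ cc) (hn : cc + 3 ≤ n)
    (hcl : ∀ j ∈ O, ∀ d : ℕ, cc - 1 ≤ d → d ≤ n - 3 → j + (d:ZMod n) ∈ O ∪ {h₀})
    (L : ℕ) (hL1 : 2 ≤ L) (hLc : L < cc)
    (hex : ∃ a, Cov O h₀ a L) : ∃ a, Cov O h₀ a (L+1) := by
  obtain ⟨a, hcov⟩ := hex
  by_cases hB : a ∈ O
  · by_cases hC : a + ((L-1:ℕ):ZMod n) ∈ O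
    · exact ⟨_, cov_mono (by omega) (growA hc hn hcl a L (by omega) (by omega) hcov hB hC)⟩
    · exact growC hc hn hcl a L hL1 hLc hcov hC
  · exact growB hc hn hcl a L hL1 hLc hcov hB

lemma grow_master (hc : 5 ≤ cc) (hn : cc + 3 ≤ n)
    (hcl : ∀ j ∈ O, ∀ d : ℕ, cc - 1 ≤ d → d ≤ n - 3 → j + (d:ZMod n) ∈ O ∪ {h₀})
    {j₀ : ZMod n} (hj₀ : j₀ ∈ O) :
    ∃ a, Cov O h₀ a cc := by
  have base : ∃ a, Cov O h₀ a 2 := by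
    refine ⟨j₀ + ((cc-1:ℕ):ZMod n), ?_⟩
    intro k hk
    rw [off_off]
    have hk2 : k = 0 ∨ k = 1 := by omega
    rcases hk2 with rfl | rfl
    · exact hcl _ hj₀ (cc-1+0) (by omega) (by omega)
    · exact hcl _ hj₀ (cc-1+1) (by omega) (by omega)
  have main : ∀ L, 2 ≤ L → L ≤ cc → ∃ a, Cov O h₀ a L := by
    intro L
    induction L with
    | zero => omega
    | succ m ih =>
      intro h1 h2
      rcases Nat.lt_or_ge m 2 with hm | hm
      · have : m + 1 = 2 := by omega
        rw [this]; exact base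
      · exact grow_step hc hn hcl m (by omega) (by omega) (ih hm (by omega))
  exact main cc (by omega) (by omega)

lemma grow_finish (hc : 5 ≤ cc) (hn : cc + 3 ≤ n)
    (hcl : ∀ j ∈ O, ∀ d : ℕ, cc - 1 ≤ d → d ≤ n - 3 → j + (d:ZMod n) ∈ O ∪ {h₀})
    {j₀ : ZMod n} (hj₀ : j₀ ∈ O) :
    ∀ t, t ∈ O ∪ {h₀} := by
  obtain ⟨a, hcov⟩ := grow_master hc hn hcl hj₀
  intro t
  obtain ⟨k₁, hk₁n, hta⟩ : ∃ k₁, k₁ < n ∧ t = a + (k₁:ZMod n) :=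
    ⟨(t-a).val, ZMod.val_lt _, by rw [val_cast_self]; ring⟩
  rcases Nat.lt_or_ge k₁ cc with h | h
  · rw [hta]; exact hcov k₁ h
  · obtain ⟨i, hidef⟩ : ∃ i, i = n - k₁ := ⟨_, rfl⟩
    have hi1 : 1 ≤ i := by omega
    have hi2 : i ≤ n - cc := by omega
    obtain ⟨k0, hk0a, hk0u, hk0c⟩ : ∃ k0, 3 ≤ k0 + i ∧ k0 ≤ 2 ∧ k0 + 1 + i ≤ n - cc + 1 := by
      rcases Nat.lt_or_ge i 3 with h3 | h3
      · exact ⟨3 - i, by omega, by omega, by omega⟩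
      · exact ⟨0, by omega, by omega, by omega⟩
    obtain ⟨k, hkO, hk1, hk2⟩ : ∃ k : ℕ, (a + (k:ZMod n) ∈ O) ∧ k0 ≤ k ∧ k ≤ k0 + 1 := by
      by_cases hx : a + (k0:ZMod n) ∈ O
      · exact ⟨k0, hx, le_refl _, by omega⟩
      · refine ⟨k0+1, ?_, by omega, le_refl _⟩
        rcases hcov (k0+1) (by omega) with h2 | h2
        · exact h2
        · exfalso
          rcases hcov k0 (by omega) with h1 | h1
          · exact hx h1
          · have h3 : a + (k0:ZMod n) = a + ((k0+1:ℕ):ZMod n) := by rw [h1, h2]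
            have := off_inj a (by omega : k0 < n) (by omega : k0+1 < n) h3
            omega
    have hd := hcl _ hkO (n - i - k) (by omega) (by omega)
    have heq : (a + (k:ZMod n)) + ((n - i - k : ℕ):ZMod n) = t := by
      rw [off_off]
      have hnat : k + (n - i - k) = k₁ := by omega
      rw [hnat]
      exact hta.symm
    rwa [heq] at hd

end Growth

end Gutin
namespace Gutin
open MPT

variable {V : Type*} {D : Digraph V} {c : ℕ} {part : V → Fin c}

/-- Outside vertex with at most one hole forces a cycle of length in `[c+1, n-1]`. -/
lemma w_win {n : ℕ} [NeZero n] (hT : IsCPT D c part) (hS : IsStrong D)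
    (hc : 5 ≤ c) (hn : c + 3 ≤ n)
    {g : ZMod n → V} (hg : Function.Injective g) (hadj : ∀ i, D.Adj (g i) (g (i+1)))
    {w : V} (hw : w ∉ Set.range g) (h₀ : ZMod n)
    (hhole : ∀ i, i ≠ h₀ → part (g i) ≠ part w) :
    ∃ ℓ, c + 1 ≤ ℓ ∧ ℓ < n ∧ HasCycle D ℓ := by
  by_cases hO : ∀ i, ¬ D.Adj w (g i)
  · rcases noout_flex hT hS hg hadj (⟨hw, hO⟩ : NoOut D g w) (c-2) (by omega) with h | h
    · exact ⟨c-2+3, by omega, by omega, h⟩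
    · exact ⟨c-2+4, by omega, by omega, h⟩
  by_cases hI : ∀ i, ¬ D.Adj (g i) w
  · rcases noin_flex hT hS hg hadj (⟨hw, hI⟩ : NoIn D g w) (c-2) (by omega) with h | h
    · exact ⟨c-2+3, by omega, by omega, h⟩
    · exact ⟨c-2+4, by omega, by omega, h⟩
  push_neg at hO hI
  obtain ⟨j₁, hj₁⟩ := hO
  obtain ⟨i₁, hi₁⟩ := hI
  by_contra hno
  push_neg at hno
  have hcl : ∀ j ∈ {i : ZMod n | D.Adj w (g i)}, ∀ d : ℕ, c - 1 ≤ d → d ≤ n - 3 →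
      j + (d:ZMod n) ∈ {i : ZMod n | D.Adj w (g i)} ∪ {h₀} := by
    intro j hj d hd1 hd2
    by_contra hmem
    simp only [Set.mem_union, Set.mem_setOf_eq, Set.mem_singleton_iff, not_or] at hmem
    have hne : part (g (j + (d:ZMod n))) ≠ part w := hhole _ hmem.2
    have hIn : D.Adj (g (j + (d:ZMod n))) w := by
      rcases adj_total hT hne with h | h
      · exact h
      · exact absurd h hmem.1
    have hcyc := hasCycle_seg1 hg hadj j d (by omega) hw hIn hj
    exact absurd hcyc (hno (d+2) (by omega) (by omega))
  have hall := grow_finish hc hn hcl (hj₁ : j₁ ∈ {i : ZMod n | D.Adj w (g i)})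
  have hi₁h : i₁ = h₀ := by
    rcases hall i₁ with h | h
    · exact absurd hi₁ (adj_asymm hT h)
    · exact h
  have hcne : ((c-1:ℕ):ZMod n) ≠ 0 := by
    intro hcon
    have h2 := (ZMod.natCast_eq_zero_iff (c-1) n).mp hcon
    have := Nat.le_of_dvd (by omega) h2
    omega
  have hj₂ : D.Adj w (g (h₀ - ((c-1:ℕ):ZMod n))) := by
    rcases hall (h₀ - ((c-1:ℕ):ZMod n)) with h | h
    · exact h
    · exact absurd (sub_eq_self.mp h) hcne
  have hend : (h₀ - ((c-1:ℕ):ZMod n)) + ((c-1:ℕ):ZMod n) = h₀ := by ring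
  have hcyc := hasCycle_seg1 hg hadj (h₀ - ((c-1:ℕ):ZMod n)) (c-1) (by omega) hw
    (by rw [hend, ← hi₁h]; exact hi₁) hj₂
  exact absurd hcyc (hno (c-1+2) (by omega) (by omega))

lemma chord_cycle_bwd {n : ℕ} [NeZero n] {g : ZMod n → V} (hg : Function.Injective g)
    (hadj : ∀ i, D.Adj (g i) (g (i+1))) (i : ZMod n) (d : ℕ) (hd1 : 1 ≤ d) (hd2 : d < n)
    (h : D.Adj (g (i + (d:ZMod n))) (g i)) : HasCycle D (d+1) :=
  hasCycle_seg0 hg hadj i d hd2 hd1 h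

lemma chord_cycle_fwd {n : ℕ} [NeZero n] {g : ZMod n → V} (hg : Function.Injective g)
    (hadj : ∀ i, D.Adj (g i) (g (i+1))) (i : ZMod n) (d : ℕ) (hd1 : 1 ≤ d) (hd2 : d < n)
    (h : D.Adj (g i) (g (i + (d:ZMod n)))) : HasCycle D (n-d+1) := by
  have hnat : (d:ℕ) + (n - d) = n := by omega
  have hkey : (i + (d:ZMod n)) + ((n-d:ℕ):ZMod n) = i := by
    calc (i + (d:ZMod n)) + ((n-d:ℕ):ZMod n) = i + ((d + (n-d) : ℕ):ZMod n) := by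
          push_cast; ring
      _ = i := by rw [hnat, ZMod.natCast_self, add_zero]
  exact hasCycle_seg0 hg hadj (i + (d:ZMod n)) (n-d) (by omega) (by omega)
    (by rw [hkey]; exact h)

end Gutin
namespace Gutin
open MPT

variable {V : Type*} {D : Digraph V} {c : ℕ} {part : V → Fin c}

lemma descend_big {n : ℕ} [NeZero n] (hT : IsCPT D c part) (hc : 5 ≤ c) (hn : 2*c+1 ≤ n)
    {g : ZMod n → V} (hg : Function.Injective g) (hadj : ∀ i, D.Adj (g i) (g (i+1))) :
    ∃ ℓ, c + 1 ≤ ℓ ∧ ℓ < n ∧ HasCycle D ℓ := by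
  by_contra hno
  push_neg at hno
  have hsame : ∀ (i : ZMod n) (d : ℕ), c ≤ d → d ≤ c+1 → part (g i) = part (g (i + (d:ZMod n))) := by
    intro i d h1 h2
    by_contra hne
    rcases adj_total hT hne with h | h
    · exact absurd (chord_cycle_fwd hg hadj i d (by omega) (by omega) h)
        (hno (n-d+1) (by omega) (by omega))
    · exact absurd (chord_cycle_bwd hg hadj i d (by omega) (by omega) h)
        (hno (d+1) (by omega) (by omega))
  have e1 : ((0:ZMod n) - ((c:ℕ):ZMod n)) + ((c:ℕ):ZMod n) = 0 := by ring
  have e2 : ((0:ZMod n) - ((c:ℕ):ZMod n)) + (((c+1:ℕ)):ZMod n) = 1 := by push_cast; ring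
  have h1 := hsame ((0:ZMod n) - ((c:ℕ):ZMod n)) c (le_refl c) (by omega)
  have h2 := hsame ((0:ZMod n) - ((c:ℕ):ZMod n)) (c+1) (by omega) (by omega)
  rw [e1] at h1
  rw [e2] at h2
  have h3 : part (g 0) = part (g (0+1)) := by
    rw [zero_add]
    exact h1.symm.trans h2
  exact adj_parts_ne hT (hadj 0) h3

lemma jump4 {n : ℕ} [NeZero n] (hc : 5 ≤ c) (hn : n = 2*c) {g : ZMod n → V}
    (hg : Function.Injective g) (hadj : ∀ i, D.Adj (g i) (g (i+1)))
    (hbwd : ∀ (i : ZMod n) (d : ℕ), 2 ≤ d → d ≤ c-1 → D.Adj (g (i + (d:ZMod n))) (g i)) :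
    HasCycle D (c+1) := by
  have hjump : ∀ x y d : ℕ, 2 ≤ d → d ≤ c-1 → (y + d = x ∨ y + d = x + n) →
      D.Adj (g ((x:ℕ):ZMod n)) (g ((y:ℕ):ZMod n)) := by
    intro x y d h1 h2 h3
    have hb := hbwd ((y:ℕ):ZMod n) d h1 h2
    have he : ((y:ℕ):ZMod n) + ((d:ℕ):ZMod n) = ((x:ℕ):ZMod n) := by
      rcases h3 with h | h
      · rw [← h]; push_cast; ring
      · have h4 : ((y + d :ℕ):ZMod n) = ((x:ℕ):ZMod n) := by
          rw [h]; push_cast [ZMod.natCast_self]; ring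
        rw [← h4]; push_cast; ring
    rwa [he] at hb
  have hstep : ∀ t : ℕ, D.Adj (g ((t:ℕ):ZMod n)) (g (((t+1):ℕ):ZMod n)) := by
    intro t
    have := seg_adj hadj 0 t
    simpa using this
  apply hasCycle_concat (c+1) (by omega)
    (fun t => g (((if t ≤ c-3 then t else if t = c-2 then 2*c-2 else if t = c-1 then 2*c-4 else c-1 : ℕ)):ZMod n))
  · intro x hx y hy hxy
    have hcast := hg hxy
    have hofflt : ∀ t : ℕ,
        (if t ≤ c-3 then t else if t = c-2 then 2*c-2 else if t = c-1 then 2*c-4 else c-1) < n := by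
      intro t; split_ifs <;> omega
    have h2 := off_inj (0 : ZMod n) (hofflt x) (hofflt y)
      (by rw [zero_add, zero_add]; exact hcast)
    split_ifs at h2 <;> omega
  · intro x hx
    by_cases h1 : x + 1 ≤ c-3
    · simp only [if_pos (show x ≤ c-3 by omega), if_pos h1]
      exact hstep x
    · by_cases h2 : x ≤ c-3
      · have hx3 : x = c-3 := by omega
        subst hx3
        simp only [if_pos (le_refl (c-3)), if_neg h1, if_pos (show c-3+1 = c-2 by omega)]
        exact hjump (c-3) (2*c-2) (c-1) (by omega) (by omega) (Or.inr (by omega))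
      · by_cases h3 : x = c-2
        · subst h3
          simp only [if_neg h2, if_pos rfl, if_neg (show ¬ c-2+1 ≤ c-3 by omega),
            if_neg (show ¬ c-2+1 = c-2 by omega), if_pos (show c-2+1 = c-1 by omega)]
          exact hjump (2*c-2) (2*c-4) 2 (by omega) (by omega) (Or.inl (by omega))
        · have hx1 : x = c-1 := by omega
          subst hx1
          simp only [if_neg h2, if_neg h3, if_pos rfl,
            if_neg (show ¬ c-1+1 ≤ c-3 by omega), if_neg (show ¬ c-1+1 = c-2 by omega),
            if_neg (show ¬ c-1+1 = c-1 by omega)]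
          exact hjump (2*c-4) (c-1) (c-3) (by omega) (by omega) (Or.inl (by omega))
  · simp only [show c+1-1 = c from rfl, if_neg (show ¬ c ≤ c-3 by omega),
      if_neg (show ¬ c = c-2 by omega), if_neg (show ¬ c = c-1 by omega),
      if_pos (show (0:ℕ) ≤ c-3 by omega)]
    exact hjump (c-1) 0 (c-1) (by omega) (by omega) (Or.inl (by omega))

lemma missing_part_win {n : ℕ} [NeZero n] (hT : IsCPT D c part) (hS : IsStrong D)
    (hRich : ∀ p : Fin c, ∃ u v : V, u ≠ v ∧ part u = p ∧ part v = p)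
    (hc : 5 ≤ c) (hn : c + 3 ≤ n)
    {g : ZMod n → V} (hg : Function.Injective g) (hadj : ∀ i, D.Adj (g i) (g (i+1)))
    {p : Fin c} (hp : ∀ i : ZMod n, part (g i) ≠ p) :
    ∃ ℓ, c + 1 ≤ ℓ ∧ ℓ < n ∧ HasCycle D ℓ := by
  obtain ⟨u, v, huv, hu, hv⟩ := hRich p
  have hur : u ∉ Set.range g := by rintro ⟨i, rfl⟩; exact hp i hu
  exact w_win hT hS hc hn hg hadj hur 0 (fun i _ hcon => hp i (by rw [hcon, hu]))

lemma descend_band {n : ℕ} [NeZero n] (hT : IsCPT D c part) (hS : IsStrong D)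
    (hRich : ∀ p : Fin c, ∃ u v : V, u ≠ v ∧ part u = p ∧ part v = p)
    (hc : 5 ≤ c) (hn : c + 3 ≤ n) (hn2 : n ≤ 2*c - 1)
    {g : ZMod n → V} (hg : Function.Injective g) (hadj : ∀ i, D.Adj (g i) (g (i+1))) :
    ∃ ℓ, c + 1 ≤ ℓ ∧ ℓ < n ∧ HasCycle D ℓ := by
  classical
  by_cases hmiss : ∀ p : Fin c, ∃ i : ZMod n, part (g i) = p
  · have hsum : ∑ p : Fin c, (Finset.univ.filter (fun i : ZMod n => part (g i) = p)).card = n := by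
      rw [← Finset.card_eq_sum_card_fiberwise (fun x _ => Finset.mem_univ (part (g x)))]
      simp [ZMod.card]
    have hone : ∃ p : Fin c, (Finset.univ.filter (fun i : ZMod n => part (g i) = p)).card = 1 := by
      by_contra hall
      push_neg at hall
      have h2 : ∀ p : Fin c, 2 ≤ (Finset.univ.filter (fun i : ZMod n => part (g i) = p)).card := by
        intro p
        obtain ⟨i, hi⟩ := hmiss p
        have hpos : 0 < (Finset.univ.filter (fun i : ZMod n => part (g i) = p)).card :=
          Finset.card_pos.mpr ⟨i, by simp [hi]⟩
        have := hall p
        omega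
      have hge : 2 * c ≤ n := by
        calc 2*c = ∑ _p : Fin c, 2 := by simp [Finset.card_univ, mul_comm]
        _ ≤ ∑ p : Fin c, (Finset.univ.filter (fun i : ZMod n => part (g i) = p)).card :=
            Finset.sum_le_sum (fun p _ => h2 p)
        _ = n := hsum
      omega
    obtain ⟨p, hp1⟩ := hone
    obtain ⟨h0, hh⟩ := Finset.card_eq_one.mp hp1
    have hfib : ∀ i : ZMod n, part (g i) = p ↔ i = h0 := by
      intro i
      constructor
      · intro hi
        have hmem : i ∈ Finset.univ.filter (fun i : ZMod n => part (g i) = p) := by simp [hi]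
        rw [hh] at hmem
        simpa using hmem
      · intro hi
        rw [hi]
        have hmem : h0 ∈ Finset.univ.filter (fun i : ZMod n => part (g i) = p) := by
          rw [hh]; exact Finset.mem_singleton_self h0
        simpa using hmem
    obtain ⟨u, v, huv, hu, hv⟩ := hRich p
    have hkey : ∀ x : V, part x = p → x ∉ Set.range g ∨ x = g h0 := by
      intro x hx
      by_cases hr : x ∈ Set.range g
      · obtain ⟨i, rfl⟩ := hr
        exact Or.inr (congrArg g ((hfib i).mp hx))
      · exact Or.inl hr
    obtain ⟨w, hwp, hwr⟩ : ∃ w : V, part w = p ∧ w ∉ Set.range g := by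
      rcases hkey u hu with h1 | h1
      · exact ⟨u, hu, h1⟩
      · rcases hkey v hv with h2 | h2
        · exact ⟨v, hv, h2⟩
        · exact absurd (h1.trans h2.symm) huv
    refine w_win hT hS hc hn hg hadj hwr h0 ?_
    intro i hi hcon
    exact hi ((hfib i).mp (by rw [hcon, hwp]))
  · push_neg at hmiss
    obtain ⟨p, hp⟩ := hmiss
    exact missing_part_win hT hS hRich hc hn hg hadj hp

lemma descend_2c {n : ℕ} [NeZero n] (hT : IsCPT D c part) (hS : IsStrong D)
    (hRich : ∀ p : Fin c, ∃ u v : V, u ≠ v ∧ part u = p ∧ part v = p)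
    (hc : 5 ≤ c) (hn : n = 2*c)
    {g : ZMod n → V} (hg : Function.Injective g) (hadj : ∀ i, D.Adj (g i) (g (i+1))) :
    ∃ ℓ, c + 1 ≤ ℓ ∧ ℓ < n ∧ HasCycle D ℓ := by
  classical
  by_contra hno
  push_neg at hno
  have hper : ∀ i : ZMod n, part (g i) = part (g (i + ((c:ℕ):ZMod n))) := by
    intro i
    by_contra hne
    rcases adj_total hT hne with h | h
    · exact absurd (chord_cycle_fwd hg hadj i c (by omega) (by omega) h)
        (hno (n-c+1) (by omega) (by omega))
    · exact absurd (chord_cycle_bwd hg hadj i c (by omega) (by omega) h)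
        (hno (c+1) (by omega) (by omega))
  have hmiss : ∀ p : Fin c, ∃ i : ZMod n, part (g i) = p := by
    by_contra hm
    push_neg at hm
    obtain ⟨p, hp⟩ := hm
    obtain ⟨ℓ, h1, h2, h3⟩ := missing_part_win hT hS hRich hc (by omega) hg hadj hp
    exact absurd h3 (hno ℓ h1 h2)
  have hcastne : ∀ x y : ℕ, x < n → y < n → x ≠ y → ((x:ℕ):ZMod n) ≠ ((y:ℕ):ZMod n) := by
    intro x y hx hy hne hcon
    have h2 : ((x:ℕ):ZMod n).val = ((y:ℕ):ZMod n).val := by rw [hcon]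
    rw [ZMod.val_cast_of_lt hx, ZMod.val_cast_of_lt hy] at h2
    exact hne h2
  have hsum : ∑ p : Fin c, (Finset.univ.filter (fun i : ZMod n => part (g i) = p)).card = n := by
    rw [← Finset.card_eq_sum_card_fiberwise (fun x _ => Finset.mem_univ (part (g x)))]
    simp [ZMod.card]
  have h2le : ∀ p : Fin c, 2 ≤ (Finset.univ.filter (fun i : ZMod n => part (g i) = p)).card := by
    intro p
    obtain ⟨i, hi⟩ := hmiss p
    refine Finset.one_lt_card.mpr ⟨i, by simp [hi], i + ((c:ℕ):ZMod n), ?_, ?_⟩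
    · simp [← hper i, hi]
    · intro hcon
      have h0 : i + ((0:ℕ):ZMod n) = i + ((c:ℕ):ZMod n) := by simpa using hcon.symm
      exact hcastne 0 c (by omega) (by omega) (by omega) (add_left_cancel h0)
  have hle2 : ∀ p : Fin c, (Finset.univ.filter (fun i : ZMod n => part (g i) = p)).card ≤ 2 := by
    intro q
    by_contra hq
    push_neg at hq
    have hlt := Finset.sum_lt_sum (f := fun _ : Fin c => 2)
      (g := fun p : Fin c => (Finset.univ.filter (fun i : ZMod n => part (g i) = p)).card)
      (fun p _ => h2le p) ⟨q, Finset.mem_univ q, hq⟩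
    have hsum2 : ∑ _p : Fin c, (2:ℕ) = 2*c := by simp [Finset.card_univ, mul_comm]
    rw [hsum, hsum2] at hlt
    omega
  have hdiff : ∀ (i : ZMod n) (d : ℕ), 2 ≤ d → d ≤ c-1 → part (g i) ≠ part (g (i + (d:ZMod n))) := by
    intro i d hd1 hd2 hcon
    have hm1 : i ∈ Finset.univ.filter (fun j : ZMod n => part (g j) = part (g i)) := by simp
    have hm2 : i + ((c:ℕ):ZMod n) ∈ Finset.univ.filter (fun j : ZMod n => part (g j) = part (g i)) := by
      simp [← hper i]
    have hm3 : i + ((d:ℕ):ZMod n) ∈ Finset.univ.filter (fun j : ZMod n => part (g j) = part (g i)) := by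
      simp [← hcon]
    have hne1 : i ≠ i + ((c:ℕ):ZMod n) := by
      intro hcon2
      have h0 : i + ((0:ℕ):ZMod n) = i + ((c:ℕ):ZMod n) := by simpa using hcon2
      exact hcastne 0 c (by omega) (by omega) (by omega) (add_left_cancel h0)
    have hne2 : i ≠ i + ((d:ℕ):ZMod n) := by
      intro hcon2
      have h0 : i + ((0:ℕ):ZMod n) = i + ((d:ℕ):ZMod n) := by simpa using hcon2
      exact hcastne 0 d (by omega) (by omega) (by omega) (add_left_cancel h0)
    have hne3 : i + ((c:ℕ):ZMod n) ≠ i + ((d:ℕ):ZMod n) := by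
      intro hcon2
      exact hcastne c d (by omega) (by omega) (by omega) (add_left_cancel hcon2)
    have hsub : ({i, i + ((c:ℕ):ZMod n), i + ((d:ℕ):ZMod n)} : Finset (ZMod n)) ⊆
        Finset.univ.filter (fun j : ZMod n => part (g j) = part (g i)) := by
      intro x hx
      simp only [Finset.mem_insert, Finset.mem_singleton] at hx
      rcases hx with rfl | rfl | rfl
      · exact hm1
      · exact hm2
      · exact hm3
    have hcard3 : ({i, i + ((c:ℕ):ZMod n), i + ((d:ℕ):ZMod n)} : Finset (ZMod n)).card = 3 := by
      rw [Finset.card_insert_of_notMem (by simp [hne1, hne2]),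
        Finset.card_insert_of_notMem (by simp [hne3]), Finset.card_singleton]
    have := Finset.card_le_card hsub
    have := hle2 (part (g i))
    omega
  have hbwd : ∀ (i : ZMod n) (d : ℕ), 2 ≤ d → d ≤ c-1 → D.Adj (g (i + (d:ZMod n))) (g i) := by
    intro i d hd1 hd2
    rcases adj_total hT (hdiff i d hd1 hd2) with h | h
    · exact absurd (chord_cycle_fwd hg hadj i d (by omega) (by omega) h)
        (hno (n-d+1) (by omega) (by omega))
    · exact h
  exact absurd (jump4 hc hn hg hadj hbwd) (hno (c+1) (by omega) (by omega))

lemma descend (hT : IsCPT D c part) (hS : IsStrong D)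
    (hRich : ∀ p : Fin c, ∃ u v : V, u ≠ v ∧ part u = p ∧ part v = p)
    (hc : 5 ≤ c) {n : ℕ} (hn : c + 3 ≤ n) (hcyc : HasCycle D n) :
    ∃ ℓ, c + 1 ≤ ℓ ∧ ℓ < n ∧ HasCycle D ℓ := by
  haveI : NeZero n := ⟨by omega⟩
  obtain ⟨g, hg, hadj⟩ := hcyc
  rcases Nat.lt_or_ge n (2*c) with h | h
  · exact descend_band hT hS hRich hc hn (by omega) hg hadj
  · rcases Nat.eq_or_lt_of_le h with h2 | h2
    · exact descend_2c hT hS hRich hc h2.symm hg hadj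
    · exact descend_big hT hc (by omega) hg hadj

lemma good_of_big (hT : IsCPT D c part) (hS : IsStrong D)
    (hRich : ∀ p : Fin c, ∃ u v : V, u ≠ v ∧ part u = p ∧ part v = p)
    (hc : 5 ≤ c) :
    ∀ n, c + 3 ≤ n → HasCycle D n → HasCycle D (c+1) ∨ HasCycle D (c+2) := by
  intro n
  induction n using Nat.strong_induction_on with
  | _ n ih =>
    intro hn hcyc
    obtain ⟨ℓ, h1, h2, h3⟩ := descend hT hS hRich hc hn hcyc
    rcases Nat.lt_or_ge ℓ (c+3) with h | h
    · have hll : ℓ = c+1 ∨ ℓ = c+2 := by omega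
      rcases hll with rfl | rfl
      · exact Or.inl h3
      · exact Or.inr h3
    · exact ih ℓ h2 h h3

end Gutin
namespace Gutin
open MPT

variable {V : Type*} {D : Digraph V} {c : ℕ} {part : V → Fin c}

lemma no_insert {m : ℕ} [NeZero m] {g : ZMod m → V}
    (hg : Function.Injective g) (hadj : ∀ i, D.Adj (g i) (g (i+1)))
    (hm2 : 2 ≤ m) (hmax : ∀ q, 2 ≤ q → HasCycle D q → q ≤ m) :
    ∀ v, v ∉ Set.range g → ∀ i, ¬(D.Adj (g i) v ∧ D.Adj v (g (i+1))) := by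
  intro v hv i hcon
  have heq : (i + 1) + ((m-1 : ℕ):ZMod m) = i := by
    calc (i + 1) + ((m-1:ℕ):ZMod m) = i + ((1 + (m-1) : ℕ):ZMod m) := by push_cast; ring
      _ = i := by
          rw [show 1 + (m-1) = m by omega, ZMod.natCast_self, add_zero]
  have hcyc := hasCycle_seg1 hg hadj (i+1) (m-1) (by omega) hv
    (by rw [heq]; exact hcon.1) hcon.2
  have := hmax (m-1+2) (by omega) hcyc
  omega

lemma pattern_lemma [NeZero c] (hT : IsCPT D c part) (hS : IsStrong D) (hc : 5 ≤ c)
    {g : ZMod c → V} (hg : Function.Injective g) (hadj : ∀ i, D.Adj (g i) (g (i+1)))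
    (hmax : ∀ q, 2 ≤ q → HasCycle D q → q ≤ c)
    (hpb : ∀ i j : ZMod c, part (g i) = part (g j) → i = j)
    {v : V} (hvr : v ∉ Set.range g) {h : ZMod c} (hpart : part (g h) = part v) :
    ∃ r, 1 ≤ r ∧ r ≤ c - 2 ∧
      ∀ k, 1 ≤ k → k ≤ c-1 → (D.Adj v (g (h + (k:ZMod c))) ↔ k ≤ r) := by
  classical
  have hhu : ∀ i : ZMod c, i ≠ h → part (g i) ≠ part v := by
    intro i hi hcon
    exact hi (hpb i h (hcon.trans hpart.symm))
  have hkne : ∀ k : ℕ, 1 ≤ k → k ≤ c-1 → h + (k:ZMod c) ≠ h := by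
    intro k h1 h2 hcon
    have h3 : h + (k:ZMod c) = h + ((0:ℕ):ZMod c) := by simpa using hcon
    have := off_inj h (by omega : k < c) (by omega : 0 < c) h3
    omega
  -- out-neighbour exists
  have hout : ∃ i, D.Adj v (g i) := by
    by_contra hno
    push_neg at hno
    rcases noout_flex hT hS hg hadj (⟨hvr, hno⟩ : NoOut D g v) (c-2) (by omega) with hcy | hcy
    · have := hmax (c-2+3) (by omega) hcy; omega
    · have := hmax (c-2+4) (by omega) hcy; omega
  have hin : ∃ i, D.Adj (g i) v := by
    by_contra hno
    push_neg at hno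
    rcases noin_flex hT hS hg hadj (⟨hvr, hno⟩ : NoIn D g v) (c-2) (by omega) with hcy | hcy
    · have := hmax (c-2+3) (by omega) hcy; omega
    · have := hmax (c-2+4) (by omega) hcy; omega
  obtain ⟨i₀, hi₀⟩ := hout
  have hi₀h : i₀ ≠ h := by
    intro hcon
    rw [hcon] at hi₀
    exact hT.not_adj_of_same v (g h) hpart.symm hi₀
  obtain ⟨k₀, hk₀1, hk₀2, hk₀e⟩ : ∃ k₀ : ℕ, 1 ≤ k₀ ∧ k₀ ≤ c-1 ∧ h + (k₀:ZMod c) = i₀ := by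
    refine ⟨(i₀ - h).val, ?_, ?_, by rw [val_cast_self]; ring⟩
    · rcases Nat.eq_zero_or_pos (i₀ - h).val with h0 | h0
      · exfalso
        have : i₀ - h = 0 := by
          have := (ZMod.val_eq_zero _).mp h0
          exact this
        exact hi₀h (by linear_combination this)
      · omega
    · have := ZMod.val_lt (i₀ - h); omega
  have hP0 : D.Adj v (g (h + ((k₀:ℕ):ZMod c))) := by rw [hk₀e]; exact hi₀
  set r := Nat.findGreatest (fun k => D.Adj v (g (h + (k:ZMod c)))) (c-1) with hrdef
  have hr1 : k₀ ≤ r := Nat.le_findGreatest hk₀2 hP0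
  have hrle : r ≤ c - 1 := Nat.findGreatest_le (c-1)
  have hPr : D.Adj v (g (h + ((r:ℕ):ZMod c))) := by
    have h5 := Nat.findGreatest_spec (P := fun k => D.Adj v (g (h + (k:ZMod c)))) hk₀2 hP0
    simpa [← hrdef] using h5
  -- downward closure
  have hdown : ∀ k, 1 ≤ k → k + 1 ≤ c-1 → D.Adj v (g (h + ((k+1:ℕ):ZMod c))) →
      D.Adj v (g (h + (k:ZMod c))) := by
    intro k h1 h2 hP
    have hne : part (g (h + (k:ZMod c))) ≠ part v := hhu _ (hkne k h1 (by omega))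
    have hnia := no_insert hg hadj (by omega) hmax v hvr (h + (k:ZMod c))
    have he : (h + (k:ZMod c)) + 1 = h + ((k+1:ℕ):ZMod c) := by push_cast; ring
    rw [he] at hnia
    by_contra hnadj
    exact hnia ⟨adj_of_not_adj hT (fun hcon => hne hcon.symm) hnadj, hP⟩
  have hup : ∀ k, 1 ≤ k → k ≤ r → D.Adj v (g (h + (k:ZMod c))) := by
    have hchain : ∀ dk, dk ≤ r - 1 → D.Adj v (g (h + ((r - dk:ℕ):ZMod c))) := by
      intro dk
      induction dk with
      | zero => intro _; simpa using hPr
      | succ dd ih =>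
        intro hdd
        have h1 := ih (by omega)
        have he : r - dd = (r - (dd+1)) + 1 := by omega
        rw [he] at h1
        exact hdown (r - (dd+1)) (by omega) (by omega) h1
    intro k h1 h2
    have := hchain (r - k) (by omega)
    rwa [show r - (r - k) = k by omega] at this
  -- r ≤ c - 2
  have hr2 : r ≤ c - 2 := by
    by_contra hcon
    have hre : r = c - 1 := by omega
    obtain ⟨i₂, hi₂⟩ := hin
    have hi₂h : i₂ ≠ h := by
      intro hcon2
      rw [hcon2] at hi₂
      exact hT.not_adj_of_same (g h) v hpart hi₂
    obtain ⟨k₂, hk₂1, hk₂2, hk₂e⟩ : ∃ k₂ : ℕ, 1 ≤ k₂ ∧ k₂ ≤ c-1 ∧ h + (k₂:ZMod c) = i₂ := by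
      refine ⟨(i₂ - h).val, ?_, ?_, by rw [val_cast_self]; ring⟩
      · rcases Nat.eq_zero_or_pos (i₂ - h).val with h0 | h0
        · exfalso
          have h3 : i₂ - h = 0 := (ZMod.val_eq_zero _).mp h0
          exact hi₂h (by linear_combination h3)
        · omega
      · have := ZMod.val_lt (i₂ - h); omega
    have := hup k₂ hk₂1 (by omega)
    rw [hk₂e] at this
    exact adj_asymm hT hi₂ this
  refine ⟨r, by omega, hr2, ?_⟩
  intro k h1 h2
  constructor
  · intro hP
    by_contra hgt
    exact Nat.findGreatest_is_greatest (P := fun k => D.Adj v (g (h + (k:ZMod c))))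
      (by rw [← hrdef]; omega) h2 hP
  · intro hk
    exact hup k h1 hk

end Gutin
namespace Gutin
open MPT

variable {V : Type*} {D : Digraph V} {c : ℕ} {part : V → Fin c}

lemma F1 [NeZero c] (hT : IsCPT D c part) (hc : 5 ≤ c)
    {g : ZMod c → V} (hg : Function.Injective g) (hadj : ∀ i, D.Adj (g i) (g (i+1)))
    (hmax : ∀ q, 2 ≤ q → HasCycle D q → q ≤ c)
    (hpb : ∀ i j : ZMod c, part (g i) = part (g j) → i = j)
    {v w : V} (hvr : v ∉ Set.range g) (hwr : w ∉ Set.range g) (hvw : D.Adj v w)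
    {hv hw : ZMod c} {rv rw : ℕ}
    (hv1 : part (g hv) = part v) (hv2 : 1 ≤ rv) (hv3 : rv ≤ c-2)
    (hv4 : ∀ k, 1 ≤ k → k ≤ c-1 → (D.Adj v (g (hv + (k:ZMod c))) ↔ k ≤ rv))
    (hw1 : part (g hw) = part w) (hw2 : 1 ≤ rw) (hw3 : rw ≤ c-2)
    (hw4 : ∀ k, 1 ≤ k → k ≤ c-1 → (D.Adj w (g (hw + (k:ZMod c))) ↔ k ≤ rw)) :
    rw + (hw - hv).val ≤ rv + 1 := by
  by_contra hcon
  push_neg at hcon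
  have hvwne : part v ≠ part w := adj_parts_ne hT hvw
  have hhne : hv ≠ hw := by
    intro h
    exact hvwne (hv1.symm.trans (h ▸ hw1))
  have hq1 : 1 ≤ (hw - hv).val := by
    rcases Nat.eq_zero_or_pos (hw - hv).val with h0 | h0
    · exfalso
      have h3 : hw - hv = 0 := (ZMod.val_eq_zero _).mp h0
      exact hhne (by linear_combination -h3)
    · exact h0
  have hq2 : (hw - hv).val ≤ c - 1 := by
    have := ZMod.val_lt (hw - hv); omega
  obtain ⟨k, hk1, hk2, hkrv, hk', hq'1, hq'⟩ : ∃ k, 1 ≤ k ∧ k ≤ c-1 ∧ rv < k ∧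
      (k + 1 - (hw - hv).val) ≤ rw ∧ 1 ≤ k + 1 - (hw - hv).val ∧
      (hw - hv).val + (k + 1 - (hw - hv).val) = k + 1 := by
    rcases Nat.lt_or_ge (rv+1) ((hw - hv).val) with hm | hm
    · exact ⟨(hw - hv).val, by omega, by omega, by omega, by omega, by omega, by omega⟩
    · exact ⟨rv+1, by omega, by omega, by omega, by omega, by omega, by omega⟩
  set k' := k + 1 - (hw - hv).val with hk'def
  have hk'1 : 1 ≤ k' := by omega
  have hk'2 : k' ≤ c - 1 := by omega
  -- in-arc at position hv + k
  have hnadj : ¬ D.Adj v (g (hv + (k:ZMod c))) := by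
    intro hA
    have := (hv4 k hk1 hk2).mp hA
    omega
  have hane : hv + (k:ZMod c) ≠ hv := by
    intro h3
    have h4 : hv + (k:ZMod c) = hv + ((0:ℕ):ZMod c) := by simpa using h3
    have := off_inj hv (by omega : k < c) (by omega : 0 < c) h4
    omega
  have hapne : part (g (hv + (k:ZMod c))) ≠ part v := by
    intro h3
    exact hane (hpb _ _ (h3.trans hv1.symm))
  have hina : D.Adj (g (hv + (k:ZMod c))) v :=
    adj_of_not_adj hT (fun h3 => hapne h3.symm) hnadj
  -- out-arc from w to position hv + k + 1
  have houtw : D.Adj w (g (hw + (k':ZMod c))) := (hw4 k' hk'1 hk'2).mpr hk'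
  have hpos : hw + ((k':ℕ):ZMod c) = (hv + (k:ZMod c)) + 1 := by
    have hhw : hv + ((((hw - hv).val):ℕ):ZMod c) = hw := by rw [val_cast_self]; ring
    calc hw + ((k':ℕ):ZMod c) = hv + ((((hw - hv).val):ℕ):ZMod c) + ((k':ℕ):ZMod c) := by
          rw [hhw]
      _ = hv + ((((hw - hv).val) + k' : ℕ):ZMod c) := by push_cast; ring
      _ = hv + (((k+1) : ℕ):ZMod c) := by rw [hq']
      _ = (hv + (k:ZMod c)) + 1 := by push_cast; ring
  rw [hpos] at houtw
  -- assemble a (c+2)-cycle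
  have hwrap : ((hv + (k:ZMod c)) + 1) + ((c-1:ℕ):ZMod c) = hv + (k:ZMod c) := by
    calc ((hv + (k:ZMod c)) + 1) + ((c-1:ℕ):ZMod c)
        = (hv + (k:ZMod c)) + ((1 + (c-1) : ℕ):ZMod c) := by push_cast; ring
      _ = hv + (k:ZMod c) := by
          rw [show 1 + (c-1) = c by omega, ZMod.natCast_self, add_zero]
  have hcyc := hasCycle_seg2 hg hadj ((hv + (k:ZMod c)) + 1) (c-1) (by omega) hvr hwr
    (adj_ne hT hvw) (by rw [hwrap]; exact hina) hvw houtw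
  have := hmax (c-1+3) (by omega) hcyc
  omega

end Gutin
namespace Gutin
open MPT

variable {V : Type*} {D : Digraph V} {c : ℕ} {part : V → Fin c}

lemma small_case (hT : IsCPT D c part) (hS : IsStrong D)
    (hRich : ∀ p : Fin c, ∃ u v : V, u ≠ v ∧ part u = p ∧ part v = p)
    (hc : 5 ≤ c) (hmax : ∀ q, 2 ≤ q → HasCycle D q → q ≤ c) : False := by
  classical
  obtain ⟨u0, v0, huv0, -, -⟩ := hRich ⟨0, by omega⟩
  obtain ⟨q0, hq02, hq0c⟩ := exists_cycle hT hS huv0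
  obtain ⟨m, hm2, hmcyc, hmgr⟩ : ∃ m, 2 ≤ m ∧ HasCycle D m ∧
      ∀ q, 2 ≤ q → HasCycle D q → q ≤ m := by
    haveI : DecidablePred (fun q => 2 ≤ q ∧ HasCycle D q) := fun _ => Classical.dec _
    obtain ⟨hA, hB⟩ := Nat.findGreatest_spec (P := fun q => 2 ≤ q ∧ HasCycle D q)
      (hmax q0 hq02 hq0c) ⟨hq02, hq0c⟩
    refine ⟨Nat.findGreatest (fun q => 2 ≤ q ∧ HasCycle D q) c, hA, hB, ?_⟩
    intro q h1 h2
    exact Nat.le_findGreatest (hmax q h1 h2) ⟨h1, h2⟩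
  have hmc : m ≤ c := hmax m hm2 hmcyc
  haveI : NeZero m := ⟨by omega⟩
  obtain ⟨g, hg, hadj⟩ := hmcyc
  -- every off-cycle vertex shares a part with a cycle vertex
  have hparts : ∀ v, v ∉ Set.range g → ∃ i, part (g i) = part v := by
    intro v hv
    by_contra hnop
    push_neg at hnop
    have hclosed : ∀ i : ZMod m, D.Adj v (g (i+1)) → D.Adj v (g i) := by
      intro i hnext
      rcases adj_total hT (show part v ≠ part (g i) from fun hcon => hnop i hcon.symm)
        with h | h
      · exact h
      · exact absurd ⟨h, hnext⟩ (no_insert hg hadj (by omega) hmgr v hv i)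
    have hstep : ∀ (k:ℕ) (j : ZMod m), D.Adj v (g j) → D.Adj v (g (j - (k:ZMod m))) := by
      intro k
      induction k with
      | zero => intro j hj; simpa using hj
      | succ dd ih =>
        intro j hj
        have h1 := ih j hj
        have he : j - ((dd:ℕ):ZMod m) = (j - ((dd+1:ℕ):ZMod m)) + 1 := by push_cast; ring
        rw [he] at h1
        exact hclosed _ h1
    have hout : ∃ i, D.Adj v (g i) := by
      by_contra hno
      push_neg at hno
      rcases noout_flex hT hS hg hadj (⟨hv, hno⟩ : NoOut D g v) (m-2) (by omega) with hcy | hcy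
      · have := hmgr (m-2+3) (by omega) hcy; omega
      · have := hmgr (m-2+4) (by omega) hcy; omega
    have hin : ∃ i, D.Adj (g i) v := by
      by_contra hno
      push_neg at hno
      rcases noin_flex hT hS hg hadj (⟨hv, hno⟩ : NoIn D g v) (m-2) (by omega) with hcy | hcy
      · have := hmgr (m-2+3) (by omega) hcy; omega
      · have := hmgr (m-2+4) (by omega) hcy; omega
    obtain ⟨j₁, hj₁⟩ := hout
    obtain ⟨i₂, hi₂⟩ := hin
    have hvi₂ : D.Adj v (g i₂) := by
      have h1 := hstep ((j₁ - i₂).val) j₁ hj₁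
      rwa [show j₁ - (((j₁ - i₂).val:ℕ):ZMod m) = i₂ by rw [val_cast_self]; ring] at h1
    exact adj_asymm hT hvi₂ hi₂
  have hsurj : ∀ p : Fin c, ∃ i : ZMod m, part (g i) = p := by
    intro p
    obtain ⟨u, v, huv, hu, hv⟩ := hRich p
    by_cases hr : u ∈ Set.range g
    · obtain ⟨i, rfl⟩ := hr; exact ⟨i, hu⟩
    · obtain ⟨i, hi⟩ := hparts u hr; exact ⟨i, hi.trans hu⟩
  have hcm : c ≤ m := by
    have h1 : Fintype.card (Fin c) ≤ Fintype.card (ZMod m) :=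
      Fintype.card_le_of_surjective (fun i => part (g i)) (fun p => hsurj p)
    simpa [ZMod.card] using h1
  have hmceq : m = c := by omega
  subst hmceq
  have hpb : ∀ i j : ZMod m, part (g i) = part (g j) → i = j := by
    have hbij : Function.Bijective (fun i : ZMod m => part (g i)) := by
      rw [Fintype.bijective_iff_surjective_and_card]
      exact ⟨fun p => hsurj p, by simp [ZMod.card]⟩
    intro i j hij
    exact hbij.1 hij
  have hoff : ∀ i : ZMod m, ∃ w, w ∉ Set.range g ∧ part (g i) = part w := by
    intro i
    obtain ⟨u, v, huv, hu, hv⟩ := hRich (part (g i))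
    by_cases hru : u ∈ Set.range g
    · obtain ⟨iu, rfl⟩ := hru
      have hiu : iu = i := hpb iu i hu
      by_cases hrv : v ∈ Set.range g
      · obtain ⟨iv, rfl⟩ := hrv
        have hiv : iv = i := hpb iv i hv
        exact absurd (congrArg g (hiv.trans hiu.symm)) (Ne.symm huv)
      · exact ⟨v, hrv, hv.symm⟩
    · exact ⟨u, hru, hu.symm⟩
  choose ow howr hopart using hoff
  have hpat : ∀ i : ZMod m, ∃ r, 1 ≤ r ∧ r ≤ m-2 ∧
      ∀ k, 1 ≤ k → k ≤ m-1 → (D.Adj (ow i) (g (i + (k:ZMod m))) ↔ k ≤ r) :=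
    fun i => pattern_lemma hT hS hc hg hadj hmgr hpb (howr i) (hopart i)
  choose orr hr1 hr2 hr4 using hpat
  have hF : ∀ i j : ZMod m, D.Adj (ow i) (ow j) → orr j + (j - i).val ≤ orr i + 1 := by
    intro i j hadj2
    exact F1 hT hc hg hadj hmgr hpb (howr i) (howr j) hadj2 (hopart i) (hr1 i) (hr2 i)
      (hr4 i) (hopart j) (hr1 j) (hr2 j) (hr4 j)
  have hops : ∀ i j : ZMod m, i ≠ j → part (ow i) ≠ part (ow j) := by
    intro i j hne hcon
    exact hne (hpb i j ((hopart i).trans (hcon.trans (hopart j).symm)))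
  have hfwd : ∀ i : ZMod m, D.Adj (ow i) (ow (i+1)) := by
    intro i
    have hne : i ≠ i + 1 := by
      intro hcon
      have h0 : i + ((0:ℕ):ZMod m) = i + ((1:ℕ):ZMod m) := by simpa using hcon
      have := off_inj i (by omega) (by omega) h0
      omega
    rcases adj_total hT (hops i (i+1) hne) with h | h
    · exact h
    · exfalso
      have hF2 := hF (i+1) i h
      have hneg : ((m-1:ℕ):ZMod m) = -1 := by
        have h2 : (((m-1)+1:ℕ):ZMod m) = 0 := by
          rw [show (m-1)+1 = m by omega]; exact ZMod.natCast_self m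
        push_cast at h2
        linear_combination h2
      have hv : (i - (i+1)).val = m - 1 := by
        rw [show i - (i+1) = ((m-1:ℕ):ZMod m) by rw [hneg]; ring,
          ZMod.val_cast_of_lt (by omega)]
      rw [hv] at hF2
      have := hr1 i
      have := hr2 (i+1)
      omega
  have hdesc : ∀ i : ZMod m, orr (i+1) ≤ orr i := by
    intro i
    have hF2 := hF i (i+1) (hfwd i)
    have hv : ((i+1) - i).val = 1 := by
      rw [show (i+1) - i = ((1:ℕ):ZMod m) by push_cast; ring,
        ZMod.val_cast_of_lt (by omega)]
    rw [hv] at hF2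
    omega
  have hiter : ∀ (k:ℕ) (i : ZMod m), orr (i + (k:ZMod m)) ≤ orr i := by
    intro k
    induction k with
    | zero => intro i; simp
    | succ dd ih =>
      intro i
      have h1 := hdesc (i + ((dd:ℕ):ZMod m))
      have h2 := ih i
      have he : (i + ((dd:ℕ):ZMod m)) + 1 = i + ((dd+1:ℕ):ZMod m) := by push_cast; ring
      rw [he] at h1
      omega
  have hreq : ∀ i j : ZMod m, orr i = orr j := by
    intro i j
    have h1 := hiter ((j - i).val) i
    have h2 := hiter ((i - j).val) j
    rw [show i + (((j-i).val:ℕ):ZMod m) = j by rw [val_cast_self]; ring] at h1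
    rw [show j + (((i-j).val:ℕ):ZMod m) = i by rw [val_cast_self]; ring] at h2
    omega
  have hne02 : (0:ZMod m) ≠ ((2:ℕ):ZMod m) := by
    intro hcon
    have h0 : (0:ZMod m) + ((0:ℕ):ZMod m) = (0:ZMod m) + ((2:ℕ):ZMod m) := by
      simpa using hcon
    have := off_inj (0:ZMod m) (by omega) (by omega) h0
    omega
  have hrr := hreq 0 ((2:ℕ):ZMod m)
  rcases adj_total hT (hops 0 ((2:ℕ):ZMod m) hne02) with h | h
  · have hF2 := hF 0 ((2:ℕ):ZMod m) h
    have hv : (((2:ℕ):ZMod m) - 0).val = 2 := by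
      rw [show ((2:ℕ):ZMod m) - 0 = ((2:ℕ):ZMod m) by ring, ZMod.val_cast_of_lt (by omega)]
    rw [hv] at hF2
    omega
  · have hF2 := hF ((2:ℕ):ZMod m) 0 h
    have hv : ((0:ZMod m) - ((2:ℕ):ZMod m)).val = m - 2 := by
      have hneg : ((m-2:ℕ):ZMod m) = (0:ZMod m) - ((2:ℕ):ZMod m) := by
        have h2 : (((m-2)+2:ℕ):ZMod m) = 0 := by
          rw [show (m-2)+2 = m by omega]; exact ZMod.natCast_self m
        push_cast at h2
        linear_combination h2
      rw [← hneg, ZMod.val_cast_of_lt (by omega)]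
    rw [hv] at hF2
    omega

end Gutin

/-- Gutin: every rich `c`-partite tournament (`c ≥ 5`) has a
`(c+1)`-cycle or a `(c+2)`-cycle. -/
theorem stmt_7 {V : Type*} (c : ℕ) (hc : 5 ≤ c) (D : Digraph V) (part : V → Fin c)
    (hT : IsCPT D c part) (hR : IsRich D c part) :
    HasCycle D (c + 1) ∨ HasCycle D (c + 2) := by
  classical
  obtain ⟨hS, hRich⟩ := hR
  by_contra hno
  push_neg at hno
  obtain ⟨hno1, hno2⟩ := hno
  by_cases hbig : ∃ n, c + 3 ≤ n ∧ HasCycle D n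
  · obtain ⟨n, hn, hcyc⟩ := hbig
    rcases Gutin.good_of_big hT hS hRich hc n hn hcyc with h | h
    · exact hno1 h
    · exact hno2 h
  · push_neg at hbig
    have hmax : ∀ q, 2 ≤ q → HasCycle D q → q ≤ c := by
      intro q h2 hcyc
      by_contra hq
      push_neg at hq
      rcases (show q = c+1 ∨ q = c+2 ∨ c+3 ≤ q by omega) with rfl | rfl | h3
      · exact hno1 hcyc
      · exact hno2 hcyc
      · exact absurd hcyc (hbig q h3)
    exact (Gutin.small_case hT hS hRich hc hmax).elim
end
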